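/- arXiv:2203.16264 — 3 statements merged into one kernel-verified Lean document; each statement's English description precedes it below -/
import Mathlib

section
/- For every λ > 0 and γ ∈ (0,1] there exist a constant s > 0 and n_0 ∈ ℕ such that for all n ≥ n_0 the following holds. Throw m = ⌊λn⌋ balls independently and uniformly at random into n bins, and let X_i be the number of balls in bin i. Then for every subset S of the bins with |S| ≥ γn, Pr[ #{i ∈ S : X_i = 1} ≤ (γ λ e^{−λ}/2)·n ] ≤ e^{−s n}. In particular, with probability 1 − e^{−Ω(n)}, a constant fraction of the bins of S receive exactly one ball. -/
open Finset

private lemma exp_le_quad {x : ℝ} (hx : |x| ≤ 1) : Real.exp x ≤ 1 + x + x ^ 2 := by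
  have h := Real.exp_bound hx (n := 2) (by norm_num)
  rw [show ∑ m ∈ Finset.range 2, x ^ m / (m.factorial : ℝ) = 1 + x by
      simp [Finset.sum_range_succ]] at h
  have h1 := (abs_le.mp h).2
  have h2 : |x| ^ 2 = x ^ 2 := sq_abs x
  have h3 : ((Nat.succ 2 : ℕ) : ℝ) / (((Nat.factorial 2 : ℕ) : ℝ) * ((2:ℕ):ℝ)) = 3/4 := by
    norm_num [Nat.factorial]
  rw [h2, h3] at h1
  nlinarith [sq_nonneg x]

private lemma abs_avg_le {α : Type} [Fintype α] [Nonempty α] (G : α → ℝ) (C : ℝ)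
    (h : ∀ v, |G v| ≤ C) : |(∑ v, G v) / (Fintype.card α : ℝ)| ≤ C := by
  have hc : (0:ℝ) < Fintype.card α := by
    exact_mod_cast Fintype.card_pos
  rw [abs_div, abs_of_pos hc, div_le_iff₀ hc]
  calc |∑ v, G v| ≤ ∑ v, |G v| := Finset.abs_sum_le_sum_abs _ _
    _ ≤ ∑ _v : α, C := Finset.sum_le_sum (fun v _ => h v)
    _ = C * Fintype.card α := by simp [Finset.sum_const, mul_comm]

private lemma step_mgf {α : Type} [Fintype α] [Nonempty α] {t : ℝ} (ht : |t| ≤ 1/2)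
    (F : α → ℝ) (hF : ∀ v w, |F v - F w| ≤ 2) :
    ∑ v, Real.exp (t * ((∑ w, F w) / (Fintype.card α : ℝ) - F v))
      ≤ (Fintype.card α : ℝ) * Real.exp (4 * t ^ 2) := by
  have hc : (0:ℝ) < Fintype.card α := by exact_mod_cast Fintype.card_pos
  set μ := (∑ w, F w) / (Fintype.card α : ℝ) with hμ
  have hdev : ∀ v, |μ - F v| ≤ 2 := by
    intro v
    have heq : μ - F v = (∑ w, (F w - F v)) / (Fintype.card α : ℝ) := by
      rw [Finset.sum_sub_distrib, sub_div, hμ, Finset.sum_const, Finset.card_univ,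
        nsmul_eq_mul]
      congr 1
      field_simp
    rw [heq]
    exact abs_avg_le _ 2 (fun w => hF w v)
  have key : ∀ v, Real.exp (t * (μ - F v)) ≤ 1 + t * (μ - F v) + 4 * t ^ 2 := by
    intro v
    have habs : |t * (μ - F v)| ≤ 1 := by
      rw [abs_mul]
      calc |t| * |μ - F v| ≤ (1/2) * 2 := by
            apply mul_le_mul ht (hdev v) (abs_nonneg _) (by norm_num)
        _ = 1 := by norm_num
    calc Real.exp (t * (μ - F v)) ≤ 1 + t * (μ - F v) + (t * (μ - F v)) ^ 2 :=
          exp_le_quad habs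
      _ ≤ 1 + t * (μ - F v) + 4 * t ^ 2 := by
          have : (t * (μ - F v)) ^ 2 ≤ t ^ 2 * 2 ^ 2 := by
            rw [mul_pow]
            apply mul_le_mul_of_nonneg_left _ (sq_nonneg t)
            rw [← sq_abs]
            exact pow_le_pow_left₀ (abs_nonneg _) (hdev v) 2
          nlinarith
  calc ∑ v, Real.exp (t * (μ - F v)) ≤ ∑ v, (1 + t * (μ - F v) + 4 * t ^ 2) :=
        Finset.sum_le_sum (fun v _ => key v)
    _ = (Fintype.card α : ℝ) * (1 + 4 * t ^ 2) := by
        rw [Finset.sum_add_distrib, Finset.sum_add_distrib, ← Finset.mul_sum,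
          Finset.sum_sub_distrib]
        simp only [Finset.sum_const, Finset.card_univ, nsmul_eq_mul, mul_one]
        have hz : (Fintype.card α : ℝ) * μ - ∑ w, F w = 0 := by
          rw [hμ]; field_simp; ring
        rw [hz]; ring
    _ ≤ (Fintype.card α : ℝ) * Real.exp (4 * t ^ 2) := by
        apply mul_le_mul_of_nonneg_left _ (le_of_lt hc)
        linarith [Real.add_one_le_exp (4 * t ^ 2)]

private lemma sum_decomp {α : Type} [Fintype α] {m : ℕ} (φ : (Fin (m+1) → α) → ℝ) :
    ∑ f : Fin (m+1) → α, φ f = ∑ f' : Fin m → α, ∑ v : α, φ (Fin.cons v f') := by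
  rw [← (Fin.consEquiv (fun _ => α)).sum_comp φ, Fintype.sum_prod_type, Finset.sum_comm]
  rfl

private lemma mgf_bound (α : Type) [Fintype α] [Nonempty α] {t : ℝ} (ht : |t| ≤ 1/2) :
    ∀ (m : ℕ) (g : (Fin m → α) → ℝ),
      (∀ (f : Fin m → α) (j : Fin m) (v : α), |g (Function.update f j v) - g f| ≤ 2) →
      ∑ f, Real.exp (t * ((∑ f', g f') / (Fintype.card α : ℝ) ^ m - g f))
        ≤ (Fintype.card α : ℝ) ^ m * Real.exp (4 * t ^ 2 * m) := by
  have hc : (0:ℝ) < Fintype.card α := by exact_mod_cast Fintype.card_pos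
  intro m
  induction m with
  | zero =>
    intro g _
    haveI : Unique (Fin 0 → α) := ⟨⟨fun i => absurd i.2 (by simp)⟩, fun f => funext fun i => absurd i.2 (by simp)⟩
    rw [Fintype.sum_unique (fun f => Real.exp (t * ((∑ f', g f') / (Fintype.card α : ℝ) ^ 0 - g f))),
      Fintype.sum_unique g]
    simp
  | succ m ih =>
    intro g hg
    set c := (Fintype.card α : ℝ) with hcdef
    set h : (Fin m → α) → ℝ := fun f' => (∑ v, g (Fin.cons v f')) / c with hh
    have hmean : (∑ f, g f) / c ^ (m+1) = (∑ f', h f') / c ^ m := by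
      rw [sum_decomp g]
      rw [show ∑ f' : Fin m → α, ∑ v : α, g (Fin.cons v f') = ∑ f' : Fin m → α, c * h f' by
        apply Finset.sum_congr rfl; intro f' _; rw [hh]; field_simp]
      rw [← Finset.mul_sum, pow_succ]
      field_simp
    set μ := (∑ f, g f) / c ^ (m+1) with hμ
    have hlip : ∀ (f' : Fin m → α) (j : Fin m) (v : α), |h (Function.update f' j v) - h f'| ≤ 2 := by
      intro f' j v
      have heq : h (Function.update f' j v) - h f'
          = (∑ w, (g (Fin.cons w (Function.update f' j v)) - g (Fin.cons w f'))) / c := by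
        rw [hh, Finset.sum_sub_distrib, sub_div]
      rw [heq]
      apply abs_avg_le
      intro w
      rw [Fin.cons_update]
      exact hg _ _ _
    calc ∑ f, Real.exp (t * (μ - g f))
        = ∑ f' : Fin m → α, ∑ v : α, Real.exp (t * (μ - g (Fin.cons v f'))) :=
          sum_decomp _
      _ = ∑ f' : Fin m → α, Real.exp (t * (μ - h f')) *
            ∑ v : α, Real.exp (t * (h f' - g (Fin.cons v f'))) := by
          apply Finset.sum_congr rfl; intro f' _
          rw [Finset.mul_sum]
          apply Finset.sum_congr rfl; intro v _
          rw [← Real.exp_add]; ring_nf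
      _ ≤ ∑ f' : Fin m → α, Real.exp (t * (μ - h f')) * (c * Real.exp (4 * t ^ 2)) := by
          apply Finset.sum_le_sum; intro f' _
          apply mul_le_mul_of_nonneg_left _ (Real.exp_nonneg _)
          exact step_mgf ht (fun v => g (Fin.cons v f'))
            (fun v w => by
              show |g (Fin.cons v f') - g (Fin.cons w f')| ≤ 2
              have hvw := hg (Fin.cons w f') 0 v
              rwa [Fin.update_cons_zero] at hvw)
      _ = (c * Real.exp (4 * t ^ 2)) * ∑ f' : Fin m → α, Real.exp (t * (μ - h f')) := by
          rw [← Finset.sum_mul]; ring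
      _ ≤ (c * Real.exp (4 * t ^ 2)) * (c ^ m * Real.exp (4 * t ^ 2 * m)) := by
          apply mul_le_mul_of_nonneg_left _ (by positivity)
          have h2 : (∑ f : Fin (m + 1) → α, g f) / c ^ (m + 1) = (∑ f', h f') / c ^ m := hmean
          rw [hμ, h2]
          exact ih h hlip
      _ = c ^ (m + 1) * Real.exp (4 * t ^ 2 * ((m + 1 : ℕ) : ℝ)) := by
          rw [pow_succ c m, show (4 * t ^ 2 * ((m + 1 : ℕ) : ℝ)) = 4 * t ^ 2 + 4 * t ^ 2 * (m:ℝ)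
            by push_cast; ring, Real.exp_add]
          ring

private lemma count_le (α : Type) [Fintype α] [Nonempty α] {t : ℝ} (ht0 : 0 ≤ t)
    (ht : t ≤ 1/2) (m : ℕ) (g : (Fin m → α) → ℝ)
    (hg : ∀ (f : Fin m → α) (j : Fin m) (v : α), |g (Function.update f j v) - g f| ≤ 2)
    (θ : ℝ) [DecidablePred fun f : Fin m → α => g f ≤ θ] :
    ((Finset.univ.filter (fun f : Fin m → α => g f ≤ θ)).card : ℝ)
      ≤ (Fintype.card α : ℝ) ^ m *
        Real.exp (4 * t ^ 2 * m - t * ((∑ f, g f) / (Fintype.card α : ℝ) ^ m - θ)) := by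
  set μ := (∑ f, g f) / (Fintype.card α : ℝ) ^ m with hμ
  have habs : |t| ≤ 1/2 := by rw [abs_of_nonneg ht0]; exact ht
  have hmgf := mgf_bound α habs m g hg
  have hlow : ((Finset.univ.filter (fun f : Fin m → α => g f ≤ θ)).card : ℝ)
      * Real.exp (t * (μ - θ)) ≤ ∑ f, Real.exp (t * (μ - g f)) := by
    calc ((Finset.univ.filter (fun f : Fin m → α => g f ≤ θ)).card : ℝ) * Real.exp (t * (μ - θ))
        = ∑ _f ∈ Finset.univ.filter (fun f : Fin m → α => g f ≤ θ), Real.exp (t * (μ - θ)) := by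
          rw [Finset.sum_const, nsmul_eq_mul]
      _ ≤ ∑ f ∈ Finset.univ.filter (fun f : Fin m → α => g f ≤ θ), Real.exp (t * (μ - g f)) := by
          apply Finset.sum_le_sum
          intro f hf
          apply Real.exp_le_exp.mpr
          apply mul_le_mul_of_nonneg_left _ ht0
          have := (Finset.mem_filter.mp hf).2
          linarith
      _ ≤ ∑ f, Real.exp (t * (μ - g f)) :=
          Finset.sum_le_sum_of_subset_of_nonneg (Finset.filter_subset _ _)
            (fun _ _ _ => Real.exp_nonneg _)
  have hcomb := le_trans hlow hmgf
  rw [show (4 * t ^ 2 * m - t * (μ - θ)) = 4 * t ^ 2 * m + (- (t * (μ - θ))) by ring,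
    Real.exp_add]
  rw [Real.exp_neg, ← mul_assoc, le_mul_inv_iff₀ (Real.exp_pos _)]
  exact hcomb

/-- number of bins of `S` receiving exactly one ball -/
private def Ynum {n m : ℕ} (S : Finset (Fin n)) (f : Fin m → Fin n) : ℕ :=
  (S.filter (fun i => (Finset.univ.filter (fun b => f b = i)).card = 1)).card

private lemma filter_card_le_aux {n : ℕ} (S : Finset (Fin n)) (p q : Fin n → Prop)
    [DecidablePred p] [DecidablePred q] (x y : Fin n)
    (h : ∀ i, i ≠ x → i ≠ y → (p i ↔ q i)) :
    (S.filter p).card ≤ (S.filter q).card + 2 := by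
  have hsub : S.filter p ⊆ (S.filter q) ∪ {x, y} := by
    intro i hi
    rw [Finset.mem_filter] at hi
    by_cases hx : i = x
    · exact Finset.mem_union_right _ (by simp [hx])
    by_cases hy : i = y
    · exact Finset.mem_union_right _ (by simp [hy])
    · exact Finset.mem_union_left _ (Finset.mem_filter.mpr ⟨hi.1, (h i hx hy).mp hi.2⟩)
  calc (S.filter p).card ≤ ((S.filter q) ∪ {x, y}).card := Finset.card_le_card hsub
    _ ≤ (S.filter q).card + ({x, y} : Finset (Fin n)).card := Finset.card_union_le _ _
    _ ≤ (S.filter q).card + 2 := by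
        have h2 : ({x, y} : Finset (Fin n)).card ≤ 2 := by
          calc ({x, y} : Finset (Fin n)).card ≤ ({y} : Finset (Fin n)).card + 1 :=
                Finset.card_insert_le x {y}
            _ = 2 := by simp
        omega

private lemma Ynum_lipschitz {n m : ℕ} (S : Finset (Fin n)) (f : Fin m → Fin n)
    (j : Fin m) (v : Fin n) :
    |((Ynum S (Function.update f j v) : ℝ)) - (Ynum S f : ℝ)| ≤ 2 := by
  set f' := Function.update f j v with hf'
  have hagree : ∀ i, i ≠ f j → i ≠ v →
      ((Finset.univ.filter (fun b => f' b = i)).card = 1 ↔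
       (Finset.univ.filter (fun b => f b = i)).card = 1) := by
    intro i hx hy
    have : (Finset.univ.filter (fun b => f' b = i)) = (Finset.univ.filter (fun b => f b = i)) := by
      apply Finset.filter_congr
      intro b _
      by_cases hb : b = j
      · subst hb
        simp only [hf', Function.update_self]
        constructor
        · intro h; exact (hy h.symm).elim
        · intro h; exact (hx h.symm).elim
      · simp [hf', Function.update_of_ne hb]
    rw [this]
  have h1 : Ynum S f' ≤ Ynum S f + 2 :=
    filter_card_le_aux S _ _ (f j) v hagree
  have h2 : Ynum S f ≤ Ynum S f' + 2 :=
    filter_card_le_aux S _ _ (f j) v (fun i hx hy => (hagree i hx hy).symm)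
  rw [abs_le]
  refine ⟨?_, ?_⟩
  · have h2' := (Nat.cast_le (α := ℝ)).mpr h2; push_cast at h2'; linarith
  · have h1' := (Nat.cast_le (α := ℝ)).mpr h1; push_cast at h1'; linarith

/-- count of functions for which bin `i` gets exactly one ball -/
private lemma count_singleton {n m : ℕ} (i : Fin n) :
    (Finset.univ.filter (fun f : Fin m → Fin n =>
      (Finset.univ.filter (fun b => f b = i)).card = 1)).card = m * (n-1)^(m-1) := by
  classical
  set A : Fin m → (Fin m → Finset (Fin n)) :=
    fun b b' => if b' = b then ({i} : Finset (Fin n)) else ({i}ᶜ : Finset (Fin n)) with hA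
  have hmem : ∀ (b : Fin m) (f : Fin m → Fin n),
      f ∈ Fintype.piFinset (A b) ↔ (f b = i ∧ ∀ b', b' ≠ b → f b' ≠ i) := by
    intro b f
    rw [Fintype.mem_piFinset]
    constructor
    · intro h
      refine ⟨?_, ?_⟩
      · have := h b; simpa [hA] using this
      · intro b' hb'
        have := h b'; simp [hA, hb'] at this; exact this
    · intro ⟨h1, h2⟩ b'
      by_cases hb' : b' = b
      · subst hb'; simp [hA, h1]
      · simp [hA, hb', h2 b' hb']
  have hset : (Finset.univ.filter (fun f : Fin m → Fin n =>
      (Finset.univ.filter (fun b => f b = i)).card = 1))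
      = Finset.univ.biUnion (fun b => Fintype.piFinset (A b)) := by
    ext f
    rw [Finset.mem_filter, Finset.mem_biUnion]
    constructor
    · intro ⟨_, hcard⟩
      obtain ⟨b, hb⟩ := Finset.card_eq_one.mp hcard
      refine ⟨b, Finset.mem_univ b, (hmem b f).mpr ⟨?_, ?_⟩⟩
      · have : b ∈ Finset.univ.filter (fun b => f b = i) := by rw [hb]; simp
        exact (Finset.mem_filter.mp this).2
      · intro b' hb'
        intro hfb'
        have : b' ∈ Finset.univ.filter (fun b => f b = i) := by
          rw [Finset.mem_filter]; exact ⟨Finset.mem_univ _, hfb'⟩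
        rw [hb, Finset.mem_singleton] at this
        exact hb' this
    · intro ⟨b, _, hf⟩
      obtain ⟨h1, h2⟩ := (hmem b f).mp hf
      refine ⟨Finset.mem_univ _, ?_⟩
      rw [Finset.card_eq_one]
      refine ⟨b, ?_⟩
      ext b'
      rw [Finset.mem_filter, Finset.mem_singleton]
      constructor
      · intro ⟨_, hfb'⟩
        by_contra hb'
        exact h2 b' hb' hfb'
      · intro hb'; subst hb'; exact ⟨Finset.mem_univ _, h1⟩
  rw [hset, Finset.card_biUnion]
  · have hcard : ∀ b : Fin m, (Fintype.piFinset (A b)).card = (n-1)^(m-1) := by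
      intro b
      rw [Fintype.card_piFinset]
      have : ∀ b', (A b b').card = if b' = b then 1 else n - 1 := by
        intro b'
        by_cases hb' : b' = b
        · simp [hA, hb']
        · simp [hA, hb', Finset.card_compl]
      rw [Finset.prod_congr rfl (fun b' _ => this b')]
      rw [← Finset.mul_prod_erase Finset.univ _ (Finset.mem_univ b)]
      simp only [if_true, ite_true, one_mul]
      rw [Finset.prod_congr rfl (fun b' hb' => if_neg (Finset.ne_of_mem_erase hb'))]
      rw [Finset.prod_const, Finset.card_erase_of_mem (Finset.mem_univ b), Finset.card_univ,
        Fintype.card_fin]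
    rw [Finset.sum_congr rfl (fun b _ => hcard b), Finset.sum_const, Finset.card_univ,
      Fintype.card_fin, smul_eq_mul]
  · intro b1 _ b2 _ hne
    rw [Function.onFun, Finset.disjoint_left]
    intro f hf1 hf2
    have h1 := ((hmem b1 f).mp hf1).1
    have h2 := ((hmem b2 f).mp hf2).2 b1 hne
    exact h2 h1

private lemma sum_Ynum {n m : ℕ} (S : Finset (Fin n)) :
    ∑ f : Fin m → Fin n, Ynum S f = S.card * (m * (n-1)^(m-1)) := by
  classical
  have : ∀ f : Fin m → Fin n, Ynum S f
      = ∑ i ∈ S, if (Finset.univ.filter (fun b => f b = i)).card = 1 then 1 else 0 := by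
    intro f
    rw [Ynum, Finset.card_filter]
  rw [Finset.sum_congr rfl (fun f _ => this f), Finset.sum_comm]
  rw [Finset.sum_congr rfl (fun i (_ : i ∈ S) => ?_)]
  · rw [Finset.sum_const, smul_eq_mul]
  · rw [← Finset.card_filter]
    exact count_singleton i

set_option maxHeartbeats 4000000 in
/-- **Many bins of `S` get exactly one ball.** For every `λ > 0` and `γ ∈ (0,1]` there are
`s > 0` and `n₀` such that for all `n ≥ n₀`: throwing `m = ⌊λ n⌋` balls independently and
uniformly at random into `n` bins (an outcome is `f : Fin m → Fin n`, each of the `n ^ m`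
outcomes equally likely), for every set `S` of bins with `|S| ≥ γ n` the probability that
at most `(γ λ e^{−λ} / 2) n` bins of `S` receive exactly one ball is at most `e^{−s n}`. -/
theorem many_singleton_bins (lam : ℝ) (hlam : 0 < lam) (γ : ℝ) (hγ0 : 0 < γ) (hγ1 : γ ≤ 1) :
    ∃ s : ℝ, 0 < s ∧ ∃ n₀ : ℕ, ∀ n, n₀ ≤ n →
      ∀ S : Finset (Fin n), γ * n ≤ S.card →
        (Nat.card {f : Fin ⌊lam * n⌋₊ → Fin n //
            (Nat.card {i : Fin n // i ∈ S ∧ Nat.card {b : Fin ⌊lam * n⌋₊ // f b = i} = 1} : ℝ)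
              ≤ γ * lam * Real.exp (-lam) / 2 * n} : ℝ) / (n : ℝ) ^ ⌊lam * n⌋₊
          ≤ Real.exp (-s * n) := by
  classical
  set B := γ * lam * Real.exp (-lam) with hB
  have hBpos : 0 < B := by rw [hB]; positivity
  set t := min (1/2 : ℝ) (B / (48 * lam)) with htdef
  have ht0 : 0 < t := lt_min (by norm_num) (div_pos hBpos (by positivity))
  have ht2 : t ≤ 1/2 := min_le_left _ _
  have htB : t ≤ B / (48 * lam) := min_le_right _ _
  clear_value B t
  refine ⟨t * B / 12, div_pos (mul_pos ht0 hBpos) (by norm_num), ⌈6*lam + 6/lam + 4⌉₊, ?_⟩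
  intro n hn S hS
  have hn4 : (6*lam + 6/lam + 4 : ℝ) ≤ n :=
    le_trans (Nat.le_ceil _) (Nat.cast_le.mpr hn)
  have hlampos6 : (0:ℝ) < 6*lam := by positivity
  have hlampos6' : (0:ℝ) < 6/lam := by positivity
  have hnR4 : (4:ℝ) ≤ n := by linarith
  have hnRpos : (0:ℝ) < n := by linarith
  have hn1 : 1 ≤ n := by exact_mod_cast (by linarith : (1:ℝ) ≤ (n:ℝ))
  haveI : Nonempty (Fin n) := ⟨⟨0, by omega⟩⟩
  set m := ⌊lam * n⌋₊ with hmdef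
  have hm_le : (m : ℝ) ≤ lam * n := Nat.floor_le (by positivity)
  have hm_gt : lam * n - 1 < m := by
    have := Nat.lt_floor_add_one (lam * n); linarith
  have hlamn6 : (6:ℝ) ≤ lam * n := by
    have h1 : 6/lam ≤ (n:ℝ) := by linarith
    calc (6:ℝ) = lam * (6/lam) := by field_simp
      _ ≤ lam * n := mul_le_mul_of_nonneg_left h1 (le_of_lt hlam)
  have hm1 : 1 ≤ m := by
    have : (1:ℝ) ≤ (m:ℝ) := by linarith
    exact_mod_cast this
  have hn6lam : 6*lam + 1 ≤ (n:ℝ) - 1 := by linarith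
  have hnm1 : (0:ℝ) < (n:ℝ) - 1 := by linarith
  set g : (Fin m → Fin n) → ℝ := fun f => (Ynum S f : ℝ) with hg
  have hglip : ∀ (f : Fin m → Fin n) (j : Fin m) (v : Fin n),
      |g (Function.update f j v) - g f| ≤ 2 := fun f j v => Ynum_lipschitz S f j v
  set θ : ℝ := B / 2 * n with hθ
  set μ : ℝ := (∑ f, g f) / (n:ℝ) ^ m with hμ
  clear_value μ
  -- the mean of g
  have hsum : (∑ f, g f) = (S.card : ℝ) * ((m:ℝ) * ((n:ℝ)-1)^(m-1)) := by
    rw [hg]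
    rw [show (∑ f : Fin m → Fin n, ((Ynum S f : ℕ) : ℝ))
        = ((∑ f : Fin m → Fin n, Ynum S f : ℕ) : ℝ) by push_cast; rfl]
    rw [sum_Ynum S]
    push_cast [Nat.cast_sub hn1]
    ring
  -- lower bound for ((n-1)/n)^(m-1)
  have hfrac : Real.exp (-lam) * (5/6) ≤ (((n:ℝ)-1)/n)^(m-1) := by
    have hstep1 : Real.exp (-(1/((n:ℝ)-1))) ≤ ((n:ℝ)-1)/n := by
      have h1 := Real.add_one_le_exp (1/((n:ℝ)-1))
      have h2 : (n:ℝ)/((n:ℝ)-1) ≤ Real.exp (1/((n:ℝ)-1)) := by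
        have he : (n:ℝ)/((n:ℝ)-1) = 1/((n:ℝ)-1) + 1 := by field_simp; ring
        rw [he]; exact h1
      have h3 : (0:ℝ) < (n:ℝ)/((n:ℝ)-1) := by positivity
      have h4 : 1/Real.exp (1/((n:ℝ)-1)) ≤ 1/((n:ℝ)/((n:ℝ)-1)) :=
        one_div_le_one_div_of_le h3 h2
      rw [Real.exp_neg, ← one_div]
      calc 1/Real.exp (1/((n:ℝ)-1)) ≤ 1/((n:ℝ)/((n:ℝ)-1)) := h4
        _ = ((n:ℝ)-1)/n := by rw [one_div_div]
    have hpow1 : Real.exp (-(1/((n:ℝ)-1)))^(m-1) ≤ (((n:ℝ)-1)/n)^(m-1) :=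
      pow_le_pow_left₀ (Real.exp_nonneg _) hstep1 _
    have hexp_pow : Real.exp (-(1/((n:ℝ)-1)))^(m-1)
        = Real.exp (-(((m-1:ℕ):ℝ)/((n:ℝ)-1))) := by
      rw [← Real.exp_nat_mul]
      congr 1
      field_simp
    have hstep3 : ((m-1:ℕ):ℝ)/((n:ℝ)-1) ≤ lam + lam/((n:ℝ)-1) := by
      have hmm : ((m-1:ℕ):ℝ) ≤ (m:ℝ) := by
        exact_mod_cast Nat.cast_le.mpr (Nat.sub_le m 1)
      rw [div_le_iff₀ hnm1]
      have : (lam + lam/((n:ℝ)-1)) * ((n:ℝ)-1) = lam * n - lam + lam := by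
        field_simp
      rw [this]
      linarith
    have hstep4 : Real.exp (-(lam + lam/((n:ℝ)-1)))
        ≤ Real.exp (-(((m-1:ℕ):ℝ)/((n:ℝ)-1))) :=
      Real.exp_le_exp.mpr (by linarith)
    have hsmall : lam/((n:ℝ)-1) ≤ 1/6 := by
      rw [div_le_iff₀ hnm1]; linarith
    have hstep5 : Real.exp (-lam) * (5/6) ≤ Real.exp (-(lam + lam/((n:ℝ)-1))) := by
      rw [show (-(lam + lam/((n:ℝ)-1))) = -lam + -(lam/((n:ℝ)-1)) by ring, Real.exp_add]
      apply mul_le_mul_of_nonneg_left _ (Real.exp_nonneg _)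
      have := Real.add_one_le_exp (-(lam/((n:ℝ)-1)))
      linarith
    calc Real.exp (-lam) * (5/6) ≤ Real.exp (-(lam + lam/((n:ℝ)-1))) := hstep5
      _ ≤ Real.exp (-(((m-1:ℕ):ℝ)/((n:ℝ)-1))) := hstep4
      _ = Real.exp (-(1/((n:ℝ)-1)))^(m-1) := hexp_pow.symm
      _ ≤ (((n:ℝ)-1)/n)^(m-1) := hpow1
  -- lower bound for m/n
  have hmn : (5/6)*lam ≤ (m:ℝ)/n := by
    rw [le_div_iff₀ hnRpos]
    nlinarith
  -- identity for μ
  have hμid : μ = (S.card : ℝ) * ((m:ℝ)/n) * ((((n:ℝ)-1)/n)^(m-1)) := by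
    rw [hμ, hsum, div_pow]
    rw [show (n:ℝ)^m = (n:ℝ)^(m-1) * n by rw [← pow_succ]; congr 1; omega]
    have hnne : (n:ℝ) ≠ 0 := ne_of_gt hnRpos
    have hpne : ((n:ℝ))^(m-1) ≠ 0 := pow_ne_zero _ hnne
    field_simp
  clear hsum
  -- lower bound for μ
  have hSpos : (0:ℝ) ≤ γ * n := by positivity
  have hμlow : (2/3) * B * n ≤ μ := by
    rw [hμid]
    have h1 : (γ*n) * ((5/6)*lam) ≤ (S.card:ℝ) * ((m:ℝ)/n) :=
      mul_le_mul hS hmn (by positivity) (Nat.cast_nonneg _)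
    have h2 : ((γ*n)*((5/6)*lam)) * (Real.exp (-lam)*(5/6))
        ≤ ((S.card:ℝ)*((m:ℝ)/n)) * ((((n:ℝ)-1)/n)^(m-1)) :=
      mul_le_mul h1 hfrac (by positivity)
        (mul_nonneg (Nat.cast_nonneg _) (div_nonneg (Nat.cast_nonneg _) hnRpos.le))
    have h3 : (2/3) * B * n ≤ ((γ*n)*((5/6)*lam)) * (Real.exp (-lam)*(5/6)) := by
      rw [hB]
      have e : ((γ*n)*((5/6)*lam)) * (Real.exp (-lam)*(5/6))
          = (25/36) * (γ*lam*Real.exp (-lam)*n) := by ring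
      have hpos : (0:ℝ) < γ*lam*Real.exp (-lam)*n :=
        mul_pos (mul_pos (mul_pos hγ0 hlam) (Real.exp_pos _)) hnRpos
      rw [e, show (2/3) * (γ * lam * Real.exp (-lam)) * n
          = (2/3) * (γ*lam*Real.exp (-lam)*n) by ring]
      nlinarith [hpos]
    linarith
  have hμθ : B * n / 6 ≤ μ - θ := by rw [hθ]; linarith
  have hexp : 4*t^2*(m:ℝ) - t*(μ - θ) ≤ -(t*B/12)*n := by
    have h1 : 4*t^2*(m:ℝ) ≤ 4*t^2*(lam*n) :=
      mul_le_mul_of_nonneg_left hm_le (by positivity)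
    have h2 : t * (48*lam) ≤ B := by
      rw [← le_div_iff₀ (by positivity)]
      calc t ≤ B / (48*lam) := htB
        _ = B / (48*lam) := rfl
    have h4 : t*(B*n/6) ≤ t*(μ - θ) := mul_le_mul_of_nonneg_left hμθ ht0.le
    have h5 := mul_le_mul_of_nonneg_left h2 (mul_nonneg ht0.le hnRpos.le)
    nlinarith
  have hmono : Real.exp (4*t^2*(m:ℝ) - t*(μ - θ)) ≤ Real.exp (-(t*B/12)*n) :=
    Real.exp_le_exp.mpr hexp
  have hcount := count_le (Fin n) ht0.le ht2 m g hglip θ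
  rw [Fintype.card_fin] at hcount
  have hmain : ((Finset.univ.filter (fun f : Fin m → Fin n => g f ≤ θ)).card : ℝ)
      ≤ (n:ℝ)^m * Real.exp (-(t*B/12)*n) := by
    calc ((Finset.univ.filter (fun f : Fin m → Fin n => g f ≤ θ)).card : ℝ)
        ≤ (n:ℝ)^m * Real.exp (4*t^2*(m:ℝ) - t*((∑ f, g f) / (n:ℝ)^m - θ)) := hcount
      _ = (n:ℝ)^m * Real.exp (4*t^2*(m:ℝ) - t*(μ - θ)) := by rw [← hμ]
      _ ≤ (n:ℝ)^m * Real.exp (-(t*B/12)*n) :=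
          mul_le_mul_of_nonneg_left hmono (by positivity)
  -- identify the Nat.card with the filter card
  have hY : ∀ f : Fin m → Fin n,
      (Nat.card {i : Fin n // i ∈ S ∧ Nat.card {b : Fin m // f b = i} = 1}) = Ynum S f := by
    intro f
    have hb : ∀ i : Fin n, Nat.card {b : Fin m // f b = i}
        = (Finset.univ.filter (fun b => f b = i)).card := fun i => by
      rw [Nat.card_eq_fintype_card, Fintype.card_subtype]
    have he : Nat.card {i : Fin n // i ∈ S ∧ Nat.card {b : Fin m // f b = i} = 1}
        = Nat.card {i : Fin n // i ∈ S.filter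
            (fun i => (Finset.univ.filter (fun b => f b = i)).card = 1)} :=
      Nat.card_congr (Equiv.subtypeEquivRight (fun i => by
        rw [Finset.mem_filter, hb i]))
    rw [he, Nat.card_eq_fintype_card, Fintype.card_coe, Ynum]
  have hcard_eq : (Nat.card {f : Fin m → Fin n //
      (Nat.card {i : Fin n // i ∈ S ∧ Nat.card {b : Fin m // f b = i} = 1} : ℝ) ≤ θ})
      = (Finset.univ.filter (fun f : Fin m → Fin n => g f ≤ θ)).card := by
    have he : Nat.card {f : Fin m → Fin n //
        (Nat.card {i : Fin n // i ∈ S ∧ Nat.card {b : Fin m // f b = i} = 1} : ℝ) ≤ θ}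
        = Nat.card {f : Fin m → Fin n // g f ≤ θ} :=
      Nat.card_congr (Equiv.subtypeEquivRight (fun f => by rw [hg, hY f]))
    rw [he, Nat.card_eq_fintype_card, Fintype.card_subtype]
  rw [hcard_eq]
  rw [div_le_iff₀ (pow_pos hnRpos m)]
  calc ((Finset.univ.filter (fun f : Fin m → Fin n => g f ≤ θ)).card : ℝ)
      ≤ (n:ℝ)^m * Real.exp (-(t*B/12)*n) := hmain
    _ = Real.exp (-(t*B/12)*n) * (n:ℝ)^m := by ring
    _ = Real.exp (-(t * B / 12)*n) * (n:ℝ)^m := by norm_num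
end

section
/- For every integer k ≥ 1 there exist a constant s > 0 and n_0 ∈ ℕ such that for all n ≥ n_0 the following holds. Let B be a set of n bins, let H be a graph on B with maximum degree at most 2k, and let S ⊆ B with |S| ≥ 9n/10. Throw m = ⌊n/(20k)⌋ balls independently and uniformly at random into the bins of B, and let X_b be the number of balls in bin b. Then Pr[ #{ b ∈ S : X_b ≥ 2 and X_{b'} = 0 for every H-neighbor b' of b } ≤ s·n ] ≤ e^{−s n}. -/
open Finset Real

namespace MIDB


lemma exp_le_quad {z d : ℝ} (hz : |z| ≤ d) (hd : d ≤ 1) :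
    Real.exp z ≤ 1 + z + (3/4) * d^2 := by
  have h1 : |z| ≤ 1 := hz.trans hd
  have h := Real.exp_bound h1 (n := 2) (by norm_num)
  have hs : ∑ m ∈ Finset.range 2, z ^ m / m.factorial = 1 + z := by
    simp [Finset.sum_range_succ]
  rw [hs] at h
  have h2 : Real.exp z - (1 + z) ≤ |z| ^ 2 * (3 / (2 * 2)) := by
    have h' := (abs_le.mp h).2
    have hc : ((Nat.succ 2 : ℕ) : ℝ) / (((Nat.factorial 2 : ℕ) : ℝ) * ((2:ℕ):ℝ)) = 3 / (2*2) := by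
      norm_num [Nat.factorial]
    rw [hc] at h'
    linarith
  have h3 : |z|^2 ≤ d^2 := by
    have : (0:ℝ) ≤ |z| := abs_nonneg z
    nlinarith
  nlinarith [h2, h3]

lemma avg_exp_le {N : ℕ} (hN : 0 < N) (Z : Fin N → ℝ) (d : ℝ) (hd : d ≤ 1)
    (hZ : ∀ x, |Z x| ≤ d) (hsum : ∑ x, Z x = 0) :
    ∑ x, Real.exp (Z x) ≤ N * Real.exp ((3/4) * d^2) := by
  have h1 : ∑ x, Real.exp (Z x) ≤ ∑ x : Fin N, (1 + Z x + (3/4) * d^2) := by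
    apply Finset.sum_le_sum
    intro x _
    exact exp_le_quad (hZ x) hd
  have h2 : ∑ x : Fin N, (1 + Z x + (3/4) * d^2) = N * (1 + (3/4)*d^2) := by
    rw [Finset.sum_add_distrib, Finset.sum_add_distrib, hsum]
    simp [Finset.card_univ]
    ring
  have h3 : 1 + (3/4)*d^2 ≤ Real.exp ((3/4) * d^2) := by
    have := Real.add_one_le_exp ((3/4) * d^2)
    linarith
  calc ∑ x, Real.exp (Z x) ≤ N * (1 + (3/4)*d^2) := by rw [← h2]; exact h1
    _ ≤ N * Real.exp ((3/4)*d^2) := by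
        apply mul_le_mul_of_nonneg_left h3 (by positivity)


lemma sum_cons_decomp {n m : ℕ} (F : (Fin (m+1) → Fin n) → ℝ) :
    ∑ f : Fin (m+1) → Fin n, F f
      = ∑ x : Fin n, ∑ f' : Fin m → Fin n, F (Fin.cons x f') := by
  calc ∑ f : Fin (m+1) → Fin n, F f
      = ∑ p : Fin n × (Fin m → Fin n), F ((Fin.consEquiv (fun _ => Fin n)) p) :=
        (Equiv.sum_comp (Fin.consEquiv fun _ => Fin n) F).symm
    _ = ∑ x : Fin n, ∑ f' : Fin m → Fin n, F (Fin.cons x f') := by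
        rw [Fintype.sum_prod_type]; rfl

lemma azuma {n : ℕ} (hn : 0 < n) (c l : ℝ) (hc : 0 ≤ c) (hl : 0 ≤ l) (hlc : l * c ≤ 1) :
    ∀ (m : ℕ) (g : (Fin m → Fin n) → ℝ),
    (∀ (f : Fin m → Fin n) (i : Fin m) (x : Fin n),
        |g (Function.update f i x) - g f| ≤ c) →
    ∑ f : Fin m → Fin n, Real.exp (l * ((∑ f' : Fin m → Fin n, g f') / (n:ℝ)^m - g f))
      ≤ (n:ℝ)^m * Real.exp (m * ((3/4) * (l*c)^2)) := by
  intro m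
  induction m with
  | zero =>
      intro g _
      simp
  | succ m ih =>
      intro g hg
      have hnR : (0:ℝ) < (n:ℝ) := by exact_mod_cast hn
      have hnm : (0:ℝ) < (n:ℝ)^m := by positivity
      set ν : ℝ := (n:ℝ)^m with hν
      set G : Fin n → ℝ := fun x => (∑ f' : Fin m → Fin n, g (Fin.cons x f')) / ν with hG
      set M : ℝ := (∑ f : Fin (m+1) → Fin n, g f) / (n:ℝ)^(m+1) with hM
      -- M = average of G
      have hMG : M * ((n:ℝ)) = (∑ x : Fin n, G x) := by
        rw [hM, sum_cons_decomp g, hG]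
        rw [← Finset.sum_div, pow_succ]
        field_simp
        rw [hν]
      -- bounded differences of G
      have hGdiff : ∀ x y : Fin n, |G x - G y| ≤ c := by
        intro x y
        have hexp : G x - G y
            = (∑ f' : Fin m → Fin n, (g (Fin.cons x f') - g (Fin.cons y f'))) / ν := by
          rw [hG, Finset.sum_sub_distrib, sub_div]
        rw [hexp, abs_div, abs_of_pos hnm]
        rw [div_le_iff₀ hnm]
        calc |∑ f' : Fin m → Fin n, (g (Fin.cons x f') - g (Fin.cons y f'))|
            ≤ ∑ f' : Fin m → Fin n, |g (Fin.cons x f') - g (Fin.cons y f')| :=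
              Finset.abs_sum_le_sum_abs _ _
          _ ≤ ∑ _f' : Fin m → Fin n, c := by
              apply Finset.sum_le_sum
              intro f' _
              have h := hg (Fin.cons y f') 0 x
              rw [Fin.update_cons_zero] at h
              exact h
          _ = c * ν := by
              rw [Finset.sum_const, Finset.card_univ, nsmul_eq_mul, hν]
              simp [Fintype.card_fun]
              ring
      -- |G x - M| ≤ c
      have hGM : ∀ x : Fin n, |G x - M| ≤ c := by
        intro x
        have : (G x - M) * n = ∑ y : Fin n, (G x - G y) := by
          rw [Finset.sum_sub_distrib, ← hMG, Finset.sum_const, Finset.card_univ, nsmul_eq_mul]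
          simp only [Finset.card_univ, Fintype.card_fin]
          ring
        have habs : |G x - M| * n = |∑ y : Fin n, (G x - G y)| := by
          rw [← this, abs_mul, abs_of_pos hnR]
        have h2 : |∑ y : Fin n, (G x - G y)| ≤ (n:ℝ) * c := by
          calc |∑ y : Fin n, (G x - G y)| ≤ ∑ y : Fin n, |G x - G y| :=
                Finset.abs_sum_le_sum_abs _ _
            _ ≤ ∑ _y : Fin n, c := Finset.sum_le_sum (fun y _ => hGdiff x y)
            _ = (n:ℝ) * c := by
                rw [Finset.sum_const, Finset.card_univ, nsmul_eq_mul]; simp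
        have h3 : |G x - M| * n ≤ c * n := by rw [habs]; linarith
        exact le_of_mul_le_mul_right h3 hnR
      -- induction hypothesis applied to each section
      have hIH : ∀ x : Fin n, ∑ f' : Fin m → Fin n, Real.exp (l * (G x - g (Fin.cons x f')))
          ≤ ν * Real.exp (m * ((3/4)*(l*c)^2)) := by
        intro x
        have hbd : ∀ (f' : Fin m → Fin n) (i : Fin m) (y : Fin n),
            |g (Fin.cons x (Function.update f' i y)) - g (Fin.cons x f')| ≤ c := by
          intro f' i y
          rw [Fin.cons_update]
          exact hg (Fin.cons x f') i.succ y
        have := ih (fun f' => g (Fin.cons x f')) hbd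
        simpa [hG] using this
      have hZ : ∀ x : Fin n, |l * (M - G x)| ≤ l * c := by
        intro x
        rw [abs_mul, abs_of_nonneg hl]
        apply mul_le_mul_of_nonneg_left _ hl
        rw [abs_sub_comm]
        exact hGM x
      have hsumMG : ∑ x : Fin n, (M - G x) = 0 := by
        rw [Finset.sum_sub_distrib, Finset.sum_const, Finset.card_univ, nsmul_eq_mul,
          Fintype.card_fin, ← hMG]
        ring
      have hsum0 : ∑ x : Fin n, l * (M - G x) = 0 := by
        rw [← Finset.mul_sum, hsumMG, mul_zero]
      calc ∑ f : Fin (m+1) → Fin n, Real.exp (l * (M - g f))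
          = ∑ x : Fin n, ∑ f' : Fin m → Fin n, Real.exp (l * (M - g (Fin.cons x f'))) :=
            sum_cons_decomp _
        _ = ∑ x : Fin n, Real.exp (l * (M - G x))
              * ∑ f' : Fin m → Fin n, Real.exp (l * (G x - g (Fin.cons x f'))) := by
            apply Finset.sum_congr rfl
            intro x _
            rw [Finset.mul_sum]
            apply Finset.sum_congr rfl
            intro f' _
            rw [← Real.exp_add]
            congr 1
            ring
        _ ≤ ∑ x : Fin n, Real.exp (l * (M - G x)) * (ν * Real.exp (m * ((3/4)*(l*c)^2))) := by
            apply Finset.sum_le_sum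
            intro x _
            exact mul_le_mul_of_nonneg_left (hIH x) (Real.exp_nonneg _)
        _ = (∑ x : Fin n, Real.exp (l * (M - G x))) * (ν * Real.exp (m * ((3/4)*(l*c)^2))) := by
            rw [← Finset.sum_mul]
        _ ≤ ((n:ℝ) * Real.exp ((3/4)*(l*c)^2)) * (ν * Real.exp (m * ((3/4)*(l*c)^2))) := by
            apply mul_le_mul_of_nonneg_right _ (by positivity)
            exact avg_exp_le hn _ (l*c) hlc hZ hsum0
        _ = (n:ℝ)^(m+1) * Real.exp ((↑(m+1) : ℝ) * ((3/4)*(l*c)^2)) := by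
            have he : Real.exp ((↑(m+1) : ℝ) * ((3/4)*(l*c)^2))
                = Real.exp ((3/4)*(l*c)^2) * Real.exp (m * ((3/4)*(l*c)^2)) := by
              rw [← Real.exp_add]
              congr 1
              push_cast
              ring
            rw [he, pow_succ, hν]
            ring


variable {n : ℕ}

lemma count_tail_le {n : ℕ} (hn : 0 < n) (m : ℕ) (g : (Fin m → Fin n) → ℝ)
    (c l r : ℝ) [DecidablePred fun f : Fin m → Fin n => g f ≤ r]
    (hc : 0 ≤ c) (hl : 0 ≤ l) (hlc : l * c ≤ 1)
    (hbd : ∀ (f : Fin m → Fin n) (i : Fin m) (x : Fin n),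
        |g (Function.update f i x) - g f| ≤ c) :
    ((Finset.univ.filter (fun f : Fin m → Fin n => g f ≤ r)).card : ℝ)
      ≤ (n:ℝ)^m * Real.exp (m * ((3/4)*(l*c)^2)
          - l * ((∑ f : Fin m → Fin n, g f)/(n:ℝ)^m - r)) := by
  set M : ℝ := (∑ f : Fin m → Fin n, g f)/(n:ℝ)^m with hM
  have hE : (0:ℝ) < Real.exp (l*(M-r)) := Real.exp_pos _
  have h1 : ((Finset.univ.filter (fun f : Fin m → Fin n => g f ≤ r)).card : ℝ)
      * Real.exp (l*(M-r))
      ≤ ∑ f : Fin m → Fin n, Real.exp (l * (M - g f)) := by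
    calc ((Finset.univ.filter (fun f : Fin m → Fin n => g f ≤ r)).card : ℝ)
            * Real.exp (l*(M-r))
        = ∑ _f ∈ Finset.univ.filter (fun f : Fin m → Fin n => g f ≤ r),
            Real.exp (l*(M-r)) := by
          rw [Finset.sum_const, nsmul_eq_mul]
      _ ≤ ∑ f ∈ Finset.univ.filter (fun f : Fin m → Fin n => g f ≤ r),
            Real.exp (l*(M - g f)) := by
          apply Finset.sum_le_sum
          intro f hf
          have hgf := (Finset.mem_filter.mp hf).2
          apply Real.exp_le_exp.mpr
          apply mul_le_mul_of_nonneg_left _ hl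
          linarith
      _ ≤ ∑ f : Fin m → Fin n, Real.exp (l*(M - g f)) := by
          apply Finset.sum_le_sum_of_subset_of_nonneg (Finset.filter_subset _ _)
          intro f _ _
          exact (Real.exp_pos _).le
  have h2 := azuma hn c l hc hl hlc m g hbd
  rw [← hM] at h2
  have h3 : ((Finset.univ.filter (fun f : Fin m → Fin n => g f ≤ r)).card : ℝ)
      ≤ ((n:ℝ)^m * Real.exp (m * ((3/4)*(l*c)^2))) / Real.exp (l*(M-r)) := by
    rw [le_div_iff₀ hE]
    exact h1.trans h2
  calc ((Finset.univ.filter (fun f : Fin m → Fin n => g f ≤ r)).card : ℝ)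
      ≤ ((n:ℝ)^m * Real.exp (m * ((3/4)*(l*c)^2))) / Real.exp (l*(M-r)) := h3
    _ = (n:ℝ)^m * Real.exp (m * ((3/4)*(l*c)^2) - l * (M - r)) := by
        rw [Real.exp_sub]
        ring

-- cardinality difference lemma
lemma card_diff_le {α : Type*} [DecidableEq α] (A B D : Finset α)
    (h : ∀ b, b ∉ D → (b ∈ A ↔ b ∈ B)) :
    |(A.card : ℝ) - (B.card : ℝ)| ≤ (D.card : ℝ) := by
  have hAB : A ⊆ B ∪ D := by
    intro b hb
    by_cases hD : b ∈ D
    · exact Finset.mem_union_right _ hD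
    · exact Finset.mem_union_left _ ((h b hD).mp hb)
  have hBA : B ⊆ A ∪ D := by
    intro b hb
    by_cases hD : b ∈ D
    · exact Finset.mem_union_right _ hD
    · exact Finset.mem_union_left _ ((h b hD).mpr hb)
  have h1 : A.card ≤ B.card + D.card :=
    (Finset.card_le_card hAB).trans (Finset.card_union_le _ _)
  have h2 : B.card ≤ A.card + D.card :=
    (Finset.card_le_card hBA).trans (Finset.card_union_le _ _)
  have h1' : (A.card : ℝ) ≤ B.card + D.card := by exact_mod_cast Nat.cast_le.mpr h1
  have h2' : (B.card : ℝ) ≤ A.card + D.card := by exact_mod_cast Nat.cast_le.mpr h2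
  rw [abs_sub_le_iff]
  constructor <;> push_cast at h1' h2' ⊢ <;> linarith

-- card of lower interval in Fin m
lemma card_filter_lt_fin (m h : ℕ) (hh : h ≤ m) :
    (Finset.univ.filter (fun i : Fin m => (i:ℕ) < h)).card = h := by
  have : (Finset.univ.filter (fun i : Fin m => (i:ℕ) < h)).card = (Finset.range h).card := by
    refine Finset.card_bij (fun i _ => (i:ℕ)) ?_ ?_ ?_
    · intro i hi
      simp only [Finset.mem_filter] at hi
      exact Finset.mem_range.mpr hi.2
    · intro i hi j hj hij
      exact Fin.ext hij
    · intro a ha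
      refine ⟨⟨a, lt_of_lt_of_le (Finset.mem_range.mp ha) hh⟩, ?_, rfl⟩
      simp [Finset.mem_range.mp ha]
  rw [this, Finset.card_range]



open Classical in
lemma hdeg {n k : ℕ} (H : SimpleGraph (Fin n))
    (hH : ∀ b : Fin n, Nat.card {b' : Fin n // H.Adj b b'} ≤ 2 * k) (β : Fin n) :
    (Finset.univ.filter (fun y : Fin n => y = β ∨ H.Adj β y)).card ≤ 2*k + 1 := by
  classical
  have hsub : (Finset.univ.filter (fun y : Fin n => y = β ∨ H.Adj β y))
      ⊆ insert β (Finset.univ.filter (fun y => H.Adj β y)) := by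
    intro y hy
    simp only [Finset.mem_filter, Finset.mem_univ, true_and] at hy
    rcases hy with rfl | h
    · exact Finset.mem_insert_self _ _
    · exact Finset.mem_insert_of_mem (by simp [h])
  have h2 : (Finset.univ.filter (fun y : Fin n => H.Adj β y)).card
      = Nat.card {b' : Fin n // H.Adj β b'} := by
    rw [Nat.card_eq_fintype_card, Fintype.card_subtype]
  calc (Finset.univ.filter (fun y : Fin n => y = β ∨ H.Adj β y)).card
      ≤ (insert β (Finset.univ.filter (fun y => H.Adj β y))).card := Finset.card_le_card hsub
    _ ≤ (Finset.univ.filter (fun y : Fin n => H.Adj β y)).card + 1 := Finset.card_insert_le _ _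
    _ ≤ 2*k + 1 := by
        have := hH β
        rw [h2]
        omega

open Classical in
lemma count_lb (k n m : ℕ) (hk : 1 ≤ k) (H : SimpleGraph (Fin n))
    (hH : ∀ b : Fin n, Nat.card {b' : Fin n // H.Adj b b'} ≤ 2 * k)
    (S : Finset (Fin n)) (hm4 : 4 ≤ m) :
    S.card * ((m/2) * (m - m/2) * ((n - (2*k+1)) ^ (m-2)))
      ≤ ∑ f : Fin m → Fin n, (Finset.univ.filter (fun b : Fin n =>
          b ∈ S ∧ 2 ≤ Nat.card {ball : Fin m // f ball = b} ∧
          ∀ b' : Fin n, H.Adj b b' → Nat.card {ball : Fin m // f ball = b'} = 0)).card := by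
  classical
  set P : Fin n → (Fin m → Fin n) → Prop := fun b f =>
    b ∈ S ∧ 2 ≤ Nat.card {ball : Fin m // f ball = b} ∧
      ∀ b' : Fin n, H.Adj b b' → Nat.card {ball : Fin m // f ball = b'} = 0 with hP
  -- swap sums
  have hswap : ∑ f : Fin m → Fin n, (Finset.univ.filter (fun b => P b f)).card
      = ∑ b : Fin n, (Finset.univ.filter (fun f : Fin m → Fin n => P b f)).card := by
    simp only [Finset.card_filter]
    rw [Finset.sum_comm]
  -- per-bin lower bound
  have hbin : ∀ b ∈ S, (m/2) * (m - m/2) * ((n - (2*k+1)) ^ (m-2))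
      ≤ (Finset.univ.filter (fun f : Fin m → Fin n => P b f)).card := by
    intro b hb
    set A : Finset (Fin n) := Finset.univ.filter (fun y => ¬(y = b ∨ H.Adj b y)) with hA
    have hAcard : n - (2*k+1) ≤ A.card := by
      have h1 : A.card = Fintype.card (Fin n)
          - (Finset.univ.filter (fun y : Fin n => y = b ∨ H.Adj b y)).card := by
        rw [hA, Finset.filter_not, Finset.card_sdiff_of_subset (Finset.filter_subset _ _),
          Finset.card_univ]
      rw [h1, Fintype.card_fin]
      have := hdeg H hH b
      omega
    have hbA : b ∉ A := by simp [hA]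
    set Lower : Finset (Fin m) := Finset.univ.filter (fun i => (i:ℕ) < m/2) with hLower
    set Upper : Finset (Fin m) := Finset.univ.filter (fun j => m/2 ≤ (j:ℕ)) with hUpper
    set E : Fin m × Fin m → Finset (Fin m → Fin n) := fun p =>
      Fintype.piFinset (fun l => if l = p.1 ∨ l = p.2 then ({b} : Finset (Fin n)) else A) with hE
    have hmem : ∀ (p : Fin m × Fin m) (f : Fin m → Fin n), f ∈ E p ↔
        (∀ l : Fin m, (l = p.1 ∨ l = p.2 → f l = b) ∧ (¬(l = p.1 ∨ l = p.2) → f l ∈ A)) := by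
      intro p f
      rw [hE, Fintype.mem_piFinset]
      constructor
      · intro h l
        constructor
        · intro hl; have := h l; rw [if_pos hl] at this; simpa using this
        · intro hl; have := h l; rwa [if_neg hl] at this
      · intro h l
        by_cases hl : l = p.1 ∨ l = p.2
        · rw [if_pos hl]; simp [(h l).1 hl]
        · rw [if_neg hl]; exact (h l).2 hl
    -- each E p is inside the filter
    have hsub : ∀ p ∈ Lower ×ˢ Upper, E p ⊆ Finset.univ.filter (fun f => P b f) := by
      intro p hp f hf
      simp only [Finset.mem_product, hLower, hUpper, Finset.mem_filter, Finset.mem_univ,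
        true_and] at hp
      have hp12 : p.1 ≠ p.2 := by
        intro h; rw [h] at hp; omega
      rw [hmem] at hf
      have hf1 : f p.1 = b := (hf p.1).1 (Or.inl rfl)
      have hf2 : f p.2 = b := (hf p.2).1 (Or.inr rfl)
      simp only [Finset.mem_filter, Finset.mem_univ, true_and, hP]
      refine ⟨hb, ?_, ?_⟩
      · -- at least two balls in b
        have hnt : Nontrivial {ball : Fin m // f ball = b} :=
          ⟨⟨⟨p.1, hf1⟩, ⟨p.2, hf2⟩, by simp [hp12]⟩⟩
        rw [Nat.card_eq_fintype_card]
        exact Fintype.one_lt_card_iff_nontrivial.mpr hnt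
      · intro b' hadj
        have hne : ∀ ball : Fin m, f ball ≠ b' := by
          intro ball hball
          by_cases hl : ball = p.1 ∨ ball = p.2
          · have hfb : f ball = b := (hf ball).1 hl
            exact H.ne_of_adj hadj (by rw [← hfb, hball])
          · have : f ball ∈ A := (hf ball).2 hl
            rw [hball] at this
            simp only [hA, Finset.mem_filter, Finset.mem_univ, true_and] at this
            exact this (Or.inr hadj)
        have : IsEmpty {ball : Fin m // f ball = b'} := by
          constructor; rintro ⟨ball, hball⟩; exact hne ball hball
        exact Nat.card_of_isEmpty
    -- disjointness
    have hdisj : ∀ p ∈ Lower ×ˢ Upper, ∀ q ∈ Lower ×ˢ Upper, p ≠ q →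
        Disjoint (E p) (E q) := by
      intro p hp q hq hpq
      simp only [Finset.mem_product, hLower, hUpper, Finset.mem_filter, Finset.mem_univ,
        true_and] at hp hq
      rw [Finset.disjoint_left]
      intro f hfp hfq
      rw [hmem] at hfp hfq
      -- find a coordinate in {p.1,p.2} not in {q.1,q.2} or vice versa
      have key : ∀ l : Fin m, (l = p.1 ∨ l = p.2) → ¬(l = q.1 ∨ l = q.2) → False := by
        intro l hl hnl
        have h1 : f l = b := (hfp l).1 hl
        have h2 : f l ∈ A := (hfq l).2 hnl
        rw [h1] at h2
        exact hbA h2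
      have key' : ∀ l : Fin m, (l = q.1 ∨ l = q.2) → ¬(l = p.1 ∨ l = p.2) → False := by
        intro l hl hnl
        have h1 : f l = b := (hfq l).1 hl
        have h2 : f l ∈ A := (hfp l).2 hnl
        rw [h1] at h2
        exact hbA h2
      by_cases h1 : p.1 = q.1
      · -- then p.2 ≠ q.2
        have h2 : p.2 ≠ q.2 := by
          intro h; exact hpq (Prod.ext h1 h)
        apply key p.2 (Or.inr rfl)
        rintro (h | h)
        · rw [h, h1] at hp; omega
        · exact h2 h
      · apply key p.1 (Or.inl rfl)
        rintro (h | h)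
        · exact h1 h
        · rw [h] at hp; omega
    -- card of each E p
    have hcardE : ∀ p ∈ Lower ×ˢ Upper, (n - (2*k+1))^(m-2) ≤ (E p).card := by
      intro p hp
      simp only [Finset.mem_product, hLower, hUpper, Finset.mem_filter, Finset.mem_univ,
        true_and] at hp
      have hp12 : p.1 ≠ p.2 := by intro h; rw [h] at hp; omega
      rw [hE]
      rw [Fintype.card_piFinset]
      have : ∏ l : Fin m, (if l = p.1 ∨ l = p.2 then ({b} : Finset (Fin n)) else A).card
          = A.card ^ (m - 2) := by
        rw [← Finset.prod_sdiff (Finset.subset_univ ({p.1, p.2} : Finset (Fin m)))]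
        have e1 : ∏ l ∈ ({p.1, p.2} : Finset (Fin m)),
            (if l = p.1 ∨ l = p.2 then ({b} : Finset (Fin n)) else A).card = 1 := by
          apply Finset.prod_eq_one
          intro l hl
          simp only [Finset.mem_insert, Finset.mem_singleton] at hl
          rw [if_pos hl]
          simp
        have e2 : ∏ l ∈ Finset.univ \ ({p.1, p.2} : Finset (Fin m)),
            (if l = p.1 ∨ l = p.2 then ({b} : Finset (Fin n)) else A).card
            = A.card ^ (m - 2) := by
          rw [Finset.prod_congr rfl (g := fun _ => A.card) ?_]
          · rw [Finset.prod_const]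
            congr 1
            rw [Finset.card_sdiff_of_subset (Finset.subset_univ _), Finset.card_univ, Fintype.card_fin]
            congr 1
            rw [Finset.card_insert_of_notMem (by simp [hp12]), Finset.card_singleton]
          · intro l hl
            simp only [Finset.mem_sdiff, Finset.mem_insert, Finset.mem_singleton, not_or] at hl
            rw [if_neg (by tauto)]
        rw [e1, e2, mul_one]
      rw [this]
      exact Nat.pow_le_pow_left hAcard _
    -- combine
    calc (m/2) * (m - m/2) * ((n - (2*k+1)) ^ (m-2))
        = ∑ p ∈ Lower ×ˢ Upper, (n - (2*k+1)) ^ (m-2) := by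
          rw [Finset.sum_const, smul_eq_mul]
          congr 1
          rw [Finset.card_product]
          congr 1
          · rw [hLower]
            exact (card_filter_lt_fin m (m/2) (Nat.div_le_self _ _)).symm
          · rw [hUpper]
            have : (Finset.univ.filter (fun j : Fin m => m/2 ≤ (j:ℕ)))
                = Finset.univ \ (Finset.univ.filter (fun j : Fin m => (j:ℕ) < m/2)) := by
              rw [← Finset.filter_not]
              apply Finset.filter_congr
              intro j _
              simp [not_lt]
            rw [this, Finset.card_sdiff_of_subset (Finset.filter_subset _ _), Finset.card_univ,
              Fintype.card_fin, card_filter_lt_fin m (m/2) (Nat.div_le_self _ _)]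
      _ ≤ ∑ p ∈ Lower ×ˢ Upper, (E p).card := Finset.sum_le_sum hcardE
      _ = ((Lower ×ˢ Upper).biUnion E).card := (Finset.card_biUnion hdisj).symm
      _ ≤ (Finset.univ.filter (fun f => P b f)).card := by
          apply Finset.card_le_card
          intro f hf
          rw [Finset.mem_biUnion] at hf
          obtain ⟨p, hp, hfp⟩ := hf
          exact hsub p hp hfp
  -- total
  calc S.card * ((m/2) * (m - m/2) * ((n - (2*k+1)) ^ (m-2)))
      = ∑ _b ∈ S, (m/2) * (m - m/2) * ((n - (2*k+1)) ^ (m-2)) := by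
        rw [Finset.sum_const, smul_eq_mul]
    _ ≤ ∑ b ∈ S, (Finset.univ.filter (fun f : Fin m → Fin n => P b f)).card :=
        Finset.sum_le_sum hbin
    _ ≤ ∑ b : Fin n, (Finset.univ.filter (fun f : Fin m → Fin n => P b f)).card :=
        Finset.sum_le_sum_of_subset (Finset.subset_univ S)
    _ = ∑ f : Fin m → Fin n, (Finset.univ.filter (fun b => P b f)).card := hswap.symm


open Classical in
lemma bdd_diff {k n m : ℕ} (H : SimpleGraph (Fin n))
    (hH : ∀ b : Fin n, Nat.card {b' : Fin n // H.Adj b b'} ≤ 2 * k) (S : Finset (Fin n))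
    (f : Fin m → Fin n) (i : Fin m) (x : Fin n) :
    |((Finset.univ.filter (fun b : Fin n => b ∈ S ∧
          2 ≤ Nat.card {ball : Fin m // Function.update f i x ball = b} ∧
          ∀ b' : Fin n, H.Adj b b' →
            Nat.card {ball : Fin m // Function.update f i x ball = b'} = 0)).card : ℝ)
      - ((Finset.univ.filter (fun b : Fin n => b ∈ S ∧
          2 ≤ Nat.card {ball : Fin m // f ball = b} ∧
          ∀ b' : Fin n, H.Adj b b' →
            Nat.card {ball : Fin m // f ball = b'} = 0)).card : ℝ)|
      ≤ 4*(k:ℝ)+2 := by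
  classical
  have hfib : ∀ y : Fin n, f i ≠ y → x ≠ y →
      Nat.card {ball : Fin m // Function.update f i x ball = y}
        = Nat.card {ball : Fin m // f ball = y} := by
    intro y h1 h2
    apply Nat.card_congr
    apply Equiv.subtypeEquivRight
    intro ball
    rcases eq_or_ne ball i with rfl | hne
    · simp only [Function.update_self]
      exact ⟨fun h => absurd h h2, fun h => absurd h h1⟩
    · simp [Function.update_of_ne hne]
  set D : Finset (Fin n) := Finset.univ.filter
      (fun b => (b = f i ∨ H.Adj (f i) b) ∨ (b = x ∨ H.Adj x b)) with hD
  have hagree : ∀ b : Fin n, b ∉ D →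
      (b ∈ Finset.univ.filter (fun b : Fin n => b ∈ S ∧
          2 ≤ Nat.card {ball : Fin m // Function.update f i x ball = b} ∧
          ∀ b' : Fin n, H.Adj b b' →
            Nat.card {ball : Fin m // Function.update f i x ball = b'} = 0)
        ↔ b ∈ Finset.univ.filter (fun b : Fin n => b ∈ S ∧
          2 ≤ Nat.card {ball : Fin m // f ball = b} ∧
          ∀ b' : Fin n, H.Adj b b' →
            Nat.card {ball : Fin m // f ball = b'} = 0)) := by
    intro b hbD
    simp only [hD, Finset.mem_filter, Finset.mem_univ, true_and, not_or] at hbD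
    obtain ⟨⟨hb1, hb2⟩, hb3, hb4⟩ := hbD
    have e1 : Nat.card {ball : Fin m // Function.update f i x ball = b}
        = Nat.card {ball : Fin m // f ball = b} :=
      hfib b (fun h => hb1 h.symm) (fun h => hb3 h.symm)
    have e2 : ∀ b' : Fin n, H.Adj b b' →
        Nat.card {ball : Fin m // Function.update f i x ball = b'}
          = Nat.card {ball : Fin m // f ball = b'} := by
      intro b' hadj
      apply hfib b'
      · intro h
        exact hb2 (h ▸ hadj).symm
      · intro h
        exact hb4 (h ▸ hadj).symm
    simp only [Finset.mem_filter, Finset.mem_univ, true_and]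
    constructor
    · rintro ⟨h1, h2, h3⟩
      rw [e1] at h2
      exact ⟨h1, h2, fun b' ha => by rw [← e2 b' ha]; exact h3 b' ha⟩
    · rintro ⟨h1, h2, h3⟩
      rw [← e1] at h2
      exact ⟨h1, h2, fun b' ha => by rw [e2 b' ha]; exact h3 b' ha⟩
  refine le_trans (card_diff_le _ _ D hagree) ?_
  have hsub : D ⊆ (Finset.univ.filter (fun b : Fin n => b = f i ∨ H.Adj (f i) b))
      ∪ (Finset.univ.filter (fun b : Fin n => b = x ∨ H.Adj x b)) := by
    rw [hD, ← Finset.filter_or]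
  have hcard : D.card ≤ (2*k+1) + (2*k+1) := by
    calc D.card ≤ ((Finset.univ.filter (fun b : Fin n => b = f i ∨ H.Adj (f i) b))
        ∪ (Finset.univ.filter (fun b : Fin n => b = x ∨ H.Adj x b))).card :=
          Finset.card_le_card hsub
      _ ≤ (Finset.univ.filter (fun b : Fin n => b = f i ∨ H.Adj (f i) b)).card
          + (Finset.univ.filter (fun b : Fin n => b = x ∨ H.Adj x b)).card :=
          Finset.card_union_le _ _
      _ ≤ (2*k+1) + (2*k+1) := Nat.add_le_add (hdeg H hH (f i)) (hdeg H hH x)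
  have : (D.card : ℝ) ≤ ((2*k+1) + (2*k+1) : ℕ) := by exact_mod_cast hcard
  refine this.trans ?_
  push_cast
  ring_nf
  linarith


end MIDB

set_option maxHeartbeats 2000000 in
/-- **Many isolated doubly-hit bins.** For every integer `k ≥ 1` there are `s > 0` and `n₀`
such that for all `n ≥ n₀`: let `H` be a graph on the `n` bins with maximum degree at most
`2k` and let `S` be a set of bins with `|S| ≥ 9n/10`.  Throwing `m = ⌊n/(20k)⌋` balls
independently and uniformly at random into the bins (an outcome is `f : Fin m → Fin n`,
each of the `n ^ m` outcomes equally likely), the probability that at most `s·n` bins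
`b ∈ S` satisfy "`b` receives at least two balls and every `H`-neighbor of `b` receives no
ball" is at most `e^{−s n}`. -/
theorem many_isolated_double_bins (k : ℕ) (hk : 1 ≤ k) :
    ∃ s : ℝ, 0 < s ∧ ∃ n₀ : ℕ, ∀ n, n₀ ≤ n →
      ∀ H : SimpleGraph (Fin n), (∀ b : Fin n, Nat.card {b' : Fin n // H.Adj b b'} ≤ 2 * k) →
      ∀ S : Finset (Fin n), (9 : ℝ) * n / 10 ≤ S.card →
        (Nat.card {f : Fin (n / (20 * k)) → Fin n //
            (Nat.card {b : Fin n // b ∈ S ∧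
                2 ≤ Nat.card {ball : Fin (n / (20 * k)) // f ball = b} ∧
                ∀ b' : Fin n, H.Adj b b' →
                  Nat.card {ball : Fin (n / (20 * k)) // f ball = b'} = 0} : ℝ)
              ≤ s * n} : ℝ) / (n : ℝ) ^ (n / (20 * k))
          ≤ Real.exp (-s * n) := by
  classical
  have hK : (1:ℝ) ≤ (k:ℝ) := by exact_mod_cast hk
  have hKpos : (0:ℝ) < (k:ℝ) := by linarith
  set K : ℝ := (k:ℝ) with hKdef
  refine ⟨1/(10^9 * K^5), by positivity, 10^6 * k^5, ?_⟩
  intro n hn H hH S hS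
  set s : ℝ := 1/(10^9 * K^5) with hsdef
  set m : ℕ := n / (20 * k) with hmdef
  -- basic positivity
  have hk5 : k ≤ k^5 := Nat.le_self_pow (by norm_num) k
  have hnk : 10^6 * k ≤ n := le_trans (by nlinarith) hn
  have hn0 : 0 < n := by nlinarith
  have hnR : (0:ℝ) < n := by exact_mod_cast hn0
  have hnK : 10^6 * K^5 ≤ (n:ℝ) := by
    have : ((10^6 * k^5 : ℕ):ℝ) ≤ n := by exact_mod_cast hn
    push_cast at this
    convert this using 2 <;> norm_num
  -- bounds on m
  have hmul : 20 * k * m + n % (20*k) = n := Nat.div_add_mod n (20*k)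
  have hmod : n % (20*k) < 20*k := Nat.mod_lt n (by positivity)
  clear_value m
  have hm_le : 20 * K * m ≤ (n:ℝ) := by
    have h : 20 * k * m ≤ n := by omega
    rw [hKdef]
    exact_mod_cast h
  have hm_ge : (n:ℝ) - 20*K ≤ 20 * K * m := by
    have h1 : n ≤ 20*k*m + 20*k := by omega
    have h2 : (n:ℝ) ≤ 20*K*m + 20*K := by
      rw [hKdef]
      exact_mod_cast h1
    linarith
  have hm420 : 420 ≤ m := by
    rw [hmdef]
    rw [Nat.le_div_iff_mul_le (by positivity)]
    calc 420 * (20*k) = 8400 * k := by ring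
      _ ≤ 10^6 * k := by nlinarith
      _ ≤ n := hnk
  have hm4 : 4 ≤ m := by omega
  have hmR2 : (2:ℝ) ≤ m := by
    have : (420:ℝ) ≤ m := by exact_mod_cast hm420
    linarith
  have hm_lb : (n:ℝ)/(21*K) ≤ (m:ℝ) := by
    rw [div_le_iff₀ (by positivity)]
    have hkm : 420 * K ≤ K * m := by
      have : (420:ℝ) ≤ (m:ℝ) := by exact_mod_cast hm420
      nlinarith
    nlinarith
  have hm_ub : (m:ℝ) ≤ (n:ℝ)/(20*K) := by
    rw [le_div_iff₀ (by positivity)]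
    linarith
  -- bounded differences for g
  set g : (Fin m → Fin n) → ℝ := fun f =>
    ((Finset.univ.filter (fun b : Fin n => b ∈ S ∧
        2 ≤ Nat.card {ball : Fin m // f ball = b} ∧
        ∀ b' : Fin n, H.Adj b b' →
          Nat.card {ball : Fin m // f ball = b'} = 0)).card : ℝ) with hgdef
  have hbd : ∀ (f : Fin m → Fin n) (i : Fin m) (x : Fin n),
      |g (Function.update f i x) - g f| ≤ 4*K+2 := by
    intro f i x
    exact MIDB.bdd_diff H hH S f i x
  -- expectation lower bound
  have hq : 2*k+1 ≤ n := by nlinarith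
  have hqR : ((n - (2*k+1) : ℕ) : ℝ) = (n:ℝ) - (2*K+1) := by
    push_cast [hq]
    ring
  have hcount := MIDB.count_lb k n m hk H hH S hm4
  have hsumg : ∑ f : Fin m → Fin n, g f
      = ((∑ f : Fin m → Fin n, (Finset.univ.filter (fun b : Fin n => b ∈ S ∧
          2 ≤ Nat.card {ball : Fin m // f ball = b} ∧
          ∀ b' : Fin n, H.Adj b b' →
            Nat.card {ball : Fin m // f ball = b'} = 0)).card : ℕ) : ℝ) := by
    push_cast
    rfl
  have hm420R : (420:ℝ) ≤ (m:ℝ) := by exact_mod_cast hm420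
  have hEx : (n:ℝ)/(4800*K^2) ≤ (∑ f : Fin m → Fin n, g f) / (n:ℝ)^m := by
    have hnmpos : (0:ℝ) < (n:ℝ)^m := by positivity
    rw [le_div_iff₀ hnmpos]
    have hcountR : (S.card:ℝ) * ((((m/2:ℕ)):ℝ) * (((m - m/2:ℕ)):ℝ)
        * ((((n - (2*k+1):ℕ)):ℝ)^(m-2))) ≤ ∑ f : Fin m → Fin n, g f := by
      rw [hsumg]
      exact_mod_cast hcount
    rw [hqR] at hcountR
    have hd2 : ((m:ℝ) - 1)/2 ≤ ((m/2 : ℕ):ℝ) := by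
      have h : m ≤ 2*(m/2) + 1 := by clear hcount hcountR; omega
      have h2 : (m:ℝ) ≤ 2*((m/2:ℕ):ℝ) + 1 := by exact_mod_cast h
      linarith
    have hd3 : (m:ℝ)/2 ≤ ((m - m/2 : ℕ):ℝ) := by
      have h : m ≤ 2*(m - m/2) := by clear hcount hcountR; omega
      have h2 : (m:ℝ) ≤ 2*((m - m/2:ℕ):ℝ) := by exact_mod_cast h
      linarith
    have hqpos : (0:ℝ) ≤ (n:ℝ) - (2*K+1) := by
      have h : ((2*k+1:ℕ):ℝ) ≤ n := by exact_mod_cast hq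
      push_cast at h
      rw [hKdef]
      linarith
    have hppos : (0:ℝ) < (n:ℝ)^(m-2) := by positivity
    -- Bernoulli bound
    have hx : (0:ℝ) ≤ (2*K+1)/(n:ℝ) := by positivity
    have hx2 : (2*K+1)/(n:ℝ) ≤ 2 := by
      rw [div_le_iff₀ hnR]
      nlinarith [hqpos]
    have ha2 : (-2:ℝ) ≤ -((2*K+1)/(n:ℝ)) := by linarith
    have hgeom := one_add_mul_le_pow ha2 (m-2)
    have h1a : (1 + -((2*K+1)/(n:ℝ))) = ((n:ℝ) - (2*K+1))/(n:ℝ) := by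
      field_simp
      try ring
    have hc2 : ((m-2:ℕ):ℝ) ≤ (m:ℝ) := by exact_mod_cast Nat.sub_le m 2
    have hsmall : ((m-2:ℕ):ℝ) * ((2*K+1)/(n:ℝ)) ≤ 3/20 := by
      have e1 : ((m-2:ℕ):ℝ) * ((2*K+1)/(n:ℝ)) ≤ (m:ℝ) * ((2*K+1)/(n:ℝ)) :=
        mul_le_mul_of_nonneg_right hc2 hx
      have e2 : (m:ℝ) * ((2*K+1)/(n:ℝ)) ≤ ((n:ℝ)/(20*K)) * ((2*K+1)/(n:ℝ)) :=
        mul_le_mul_of_nonneg_right hm_ub hx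
      have e3 : ((n:ℝ)/(20*K)) * ((2*K+1)/(n:ℝ)) = (2*K+1)/(20*K) := by
        field_simp
      have e4 : (2*K+1)/(20*K) ≤ 3/20 := by
        rw [div_le_div_iff₀ (by positivity) (by norm_num)]
        nlinarith
      rw [e3] at e2
      linarith
    have hlow : (17/20 : ℝ) ≤ 1 + ((m-2:ℕ):ℝ) * (-((2*K+1)/(n:ℝ))) := by
      have e : ((m-2:ℕ):ℝ) * (-((2*K+1)/(n:ℝ))) = -(((m-2:ℕ):ℝ) * ((2*K+1)/(n:ℝ))) := by
        ring
      rw [e]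
      linarith
    have hup : (17/20 : ℝ) ≤ (((n:ℝ) - (2*K+1))/(n:ℝ))^(m-2) := by
      rw [← h1a]
      exact le_trans hlow hgeom
    rw [div_pow, le_div_iff₀ hppos] at hup
    have hber : (17/20) * (n:ℝ)^(m-2) ≤ ((n:ℝ) - (2*K+1))^(m-2) := hup
    -- assemble
    have hsplit : (n:ℝ)^m = (n:ℝ)^2 * (n:ℝ)^(m-2) := by
      rw [← pow_add]
      congr 1
      clear hcount hcountR
      omega
    have hQ0 : (0:ℝ) ≤ ((n:ℝ) - (2*K+1))^(m-2) := le_trans (by positivity) hber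
    have hd20 : (0:ℝ) ≤ ((m/2 : ℕ):ℝ) := Nat.cast_nonneg _
    have hd30 : (0:ℝ) ≤ ((m - m/2 : ℕ):ℝ) := Nat.cast_nonneg _
    have hS0 : (0:ℝ) ≤ (9:ℝ)*n/10 := by positivity
    -- core numeric inequality
    have hA : (n:ℝ) ≤ (m:ℝ)*(21*K) := by
      rw [← div_le_iff₀ (by positivity)]
      exact hm_lb
    have hsq : (n:ℝ)^2 ≤ 441*K^2*(m:ℝ)^2 := by nlinarith [hA, hnR.le]
    have core : (n:ℝ)^3/(4800*K^2)
        ≤ ((9:ℝ)*n/10) * ((((m:ℝ)-1)/2) * ((m:ℝ)/2 * ((17/20) * 1))) := by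
      rw [div_le_iff₀ (by positivity)]
      have h1 : (n:ℝ)^3 ≤ (n:ℝ)*(441*K^2*(m:ℝ)^2) := by nlinarith [hsq, hnR.le]
      have h2 : (0:ℝ) ≤ (n:ℝ)*K^2*(m:ℝ)*(477*(m:ℝ) - 918) := by
        apply mul_nonneg
        apply mul_nonneg
        apply mul_nonneg hnR.le (by positivity)
        · linarith
        · linarith
      nlinarith [h1, h2]
    -- put it together
    calc (n:ℝ)/(4800*K^2) * (n:ℝ)^m
        = ((n:ℝ)^3/(4800*K^2)) * (n:ℝ)^(m-2) := by
          rw [hsplit]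
          ring
      _ ≤ (((9:ℝ)*n/10) * ((((m:ℝ)-1)/2) * ((m:ℝ)/2 * ((17/20) * 1)))) * (n:ℝ)^(m-2) := by
          apply mul_le_mul_of_nonneg_right core hppos.le
      _ = ((9:ℝ)*n/10) * (((((m:ℝ)-1)/2) * ((m:ℝ)/2)) * ((17/20) * (n:ℝ)^(m-2))) := by
          ring
      _ ≤ (S.card:ℝ) * ((((m/2:ℕ)):ℝ) * (((m - m/2:ℕ)):ℝ)
            * (((n:ℝ) - (2*K+1))^(m-2))) := by
          have hin0 : (0:ℝ) ≤ ((((m:ℝ)-1)/2) * ((m:ℝ)/2)) * ((17/20)*(n:ℝ)^(m-2)) := by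
            apply mul_nonneg
            · apply mul_nonneg
              · linarith
              · positivity
            · positivity
          apply mul_le_mul hS ?_ hin0 (le_trans hS0 hS)
          apply mul_le_mul ?_ hber (by positivity) (by positivity)
          apply mul_le_mul hd2 hd3 (by positivity) hd20
      _ ≤ ∑ f : Fin m → Fin n, g f := hcountR
  -- apply concentration
  have hmain := MIDB.count_tail_le hn0 m g (4*K+2) (1/(20000*K^3)) (s * n)
    (by positivity) (by positivity)
    (by
      rw [div_mul_eq_mul_div, div_le_one (by positivity)]
      nlinarith)
    hbd
  -- outer bridge
  have houter : (Nat.card {f : Fin m → Fin n //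
      (Nat.card {b : Fin n // b ∈ S ∧
          2 ≤ Nat.card {ball : Fin m // f ball = b} ∧
          ∀ b' : Fin n, H.Adj b b' →
            Nat.card {ball : Fin m // f ball = b'} = 0} : ℝ)
        ≤ s * n} : ℝ)
      = ((Finset.univ.filter (fun f : Fin m → Fin n => g f ≤ s * n)).card : ℝ) := by
    have hbridge : ∀ f : Fin m → Fin n,
        (Nat.card {b : Fin n // b ∈ S ∧
          2 ≤ Nat.card {ball : Fin m // f ball = b} ∧
          ∀ b' : Fin n, H.Adj b b' →
            Nat.card {ball : Fin m // f ball = b'} = 0} : ℝ) = g f := by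
      intro f
      rw [hgdef]
      norm_cast
      rw [Nat.card_eq_fintype_card, Fintype.card_subtype]
    rw [Nat.card_eq_fintype_card, Fintype.card_subtype]
    norm_cast
    congr 1
    apply Finset.filter_congr
    intro f _
    rw [hbridge f]
  -- final numeric computation
  rw [houter]
  set Ex : ℝ := (∑ f : Fin m → Fin n, g f) / (n:ℝ)^m with hExdef
  have hnm : (0:ℝ) < (n:ℝ)^m := by positivity
  rw [div_le_iff₀ hnm]
  have harg : (m:ℝ) * (3/4*((1/(20000*K^3))*(4*K+2))^2)
      - (1/(20000*K^3)) * (Ex - s * n) ≤ -s * n := by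
    have hK2 : (0:ℝ) < K^2 := by positivity
    have hK5 : (0:ℝ) < K^5 := by positivity
    have hu : (0:ℝ) ≤ (n:ℝ)/K^5 := by positivity
    have hA : (1/(20000*K^3))*(4*K+2) ≤ 3/(10000*K^2) := by
      rw [div_mul_eq_mul_div, div_le_div_iff₀ (by positivity) (by positivity)]
      nlinarith
    have hA0 : (0:ℝ) ≤ (1/(20000*K^3))*(4*K+2) := by positivity
    have h1 : (m:ℝ) * (3/4*((1/(20000*K^3))*(4*K+2))^2)
        ≤ ((n:ℝ)/(20*K)) * (3/4*(3/(10000*K^2))^2) := by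
      apply mul_le_mul hm_ub _ (by positivity) (by positivity)
      have := mul_self_le_mul_self hA0 hA
      nlinarith
    have h1e : ((n:ℝ)/(20*K)) * (3/4*(3/(10000*K^2))^2) = (27/(8*10^9)) * ((n:ℝ)/K^5) := by
      field_simp
      ring
    have h2 : (1/96000000) * ((n:ℝ)/K^5) ≤ (1/(20000*K^3)) * Ex := by
      have := mul_le_mul_of_nonneg_left hEx (le_of_lt (by positivity : (0:ℝ) < 1/(20000*K^3)))
      calc (1/96000000) * ((n:ℝ)/K^5)
          = (1/(20000*K^3)) * ((n:ℝ)/(4800*K^2)) := by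
            field_simp
            try ring
            try tauto
        _ ≤ (1/(20000*K^3)) * Ex := this
    have h3 : (1/(20000*K^3)) * (s*n) ≤ (1/10^9) * ((n:ℝ)/K^5) := by
      have hsn : s * n = (1/10^9) * ((n:ℝ)/K^5) := by
        rw [hsdef]
        field_simp
      have hl1 : (1:ℝ)/(20000*K^3) ≤ 1 := by
        rw [div_le_one (by positivity)]
        nlinarith
      have hX : (0:ℝ) ≤ (1/10^9) * ((n:ℝ)/K^5) := by positivity
      rw [hsn]
      nlinarith [mul_nonneg (by linarith : (0:ℝ) ≤ 1 - 1/(20000*K^3)) hX]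
    have hsn : s * n = (1/10^9) * ((n:ℝ)/K^5) := by
      rw [hsdef]
      field_simp
    have hnum : (27/(8*10^9)) * ((n:ℝ)/K^5) + (1/10^9) * ((n:ℝ)/K^5) + (1/10^9) * ((n:ℝ)/K^5)
        ≤ (1/96000000) * ((n:ℝ)/K^5) := by linarith
    rw [hsn] at h3 ⊢
    have hexp : (1/(20000*K^3))*(Ex - (1/10^9) * ((n:ℝ)/K^5))
        = (1/(20000*K^3))*Ex - (1/(20000*K^3))*((1/10^9) * ((n:ℝ)/K^5)) := by ring
    rw [hexp]
    linarith [h1.trans h1e.le]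
  calc ((Finset.univ.filter (fun f : Fin m → Fin n => g f ≤ s * n)).card : ℝ)
      ≤ (n:ℝ)^m * Real.exp ((m:ℝ) * (3/4*((1/(20000*K^3))*(4*K+2))^2)
          - (1/(20000*K^3)) * (Ex - s * n)) := hmain
    _ ≤ Real.exp (-s * n) * (n:ℝ)^m := by
        rw [mul_comm]
        apply mul_le_mul_of_nonneg_right _ (le_of_lt hnm)
        exact Real.exp_le_exp.mpr harg
end

section
/- For every real δ with 0 < δ < 2 there exist a constant c_δ > 0 and infinitely many n ∈ ℕ for which the following holds: there exist a tree T on n vertices, two bijective labelings M_0, M_1 of T, and a sequence of K adjacent swaps transforming M_0 into M_1, such that every labeling M_H (an arbitrary function from labels to vertices) with D(M_0, M_H) ≤ (2−δ)·K satisfies D(M_1, M_H) ≥ c_δ · n². In particular, any algorithm that starts with a perfect hypothesis of M_0 and performs at most (2−δ)·K single-edge label moves while the adversarial evolver performs the K swaps ends at distance Ω(n²) from M_1, since each single-edge move changes D by at most 1. -/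
/-- Applying a list of swaps to a labeling: the swap at the pair of vertices `(u, v)`
exchanges the labels residing at `u` and at `v`. -/
def applySwaps {L V : Type*} [DecidableEq V]
    (swaps : List (V × V)) (M : L → V) : L → V :=
  swaps.foldl
    (fun M p => fun l => if M l = p.1 then p.2 else if M l = p.2 then p.1 else M l) M

namespace SpeedupAux

/-- The swap function of a pair of vertices. -/
def swapf {V : Type*} [DecidableEq V] (p : V × V) (x : V) : V :=
  if x = p.1 then p.2 else if x = p.2 then p.1 else x

lemma applySwaps_nil {L V : Type*} [DecidableEq V] (M : L → V) :
    applySwaps ([] : List (V × V)) M = M := rfl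

lemma applySwaps_cons {L V : Type*} [DecidableEq V] (p : V × V) (s : List (V × V)) (M : L → V) :
    applySwaps (p :: s) M = applySwaps s (fun l => swapf p (M l)) := rfl

lemma applySwaps_eq_comp_self {V : Type*} [DecidableEq V] (s : List (V × V)) (M : V → V) :
    applySwaps s M = applySwaps s id ∘ M := by
  induction s generalizing M with
  | nil => rfl
  | cons p s ih =>
    rw [applySwaps_cons, applySwaps_cons, ih (fun l => swapf p (M l)),
      ih (fun x : V => swapf p (id x))]
    rfl

lemma applySwaps_eq_comp {L V : Type*} [DecidableEq V] (s : List (V × V)) (M : L → V) :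
    applySwaps s M = applySwaps s id ∘ M := by
  induction s generalizing M with
  | nil => rfl
  | cons p s ih =>
    rw [applySwaps_cons, ih (fun l => swapf p (M l)),
      applySwaps_cons, applySwaps_eq_comp_self s (fun x : V => swapf p (id x))]
    rfl

lemma applySwaps_append {L V : Type*} [DecidableEq V] (s t : List (V × V)) (M : L → V) :
    applySwaps (s ++ t) M = applySwaps t (applySwaps s M) := by
  unfold applySwaps
  rw [List.foldl_append]

lemma applySwaps_bijective {V : Type*} [DecidableEq V] (s : List (V × V)) :
    Function.Bijective (applySwaps s (id : V → V)) := by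
  induction s with
  | nil => exact Function.bijective_id
  | cons p s ih =>
    rw [applySwaps_cons, applySwaps_eq_comp]
    have hswap : (fun l => swapf p (id l)) = ⇑(Equiv.swap p.1 p.2) := by
      funext x
      rw [Equiv.swap_apply_def]
      rfl
    rw [hswap]
    exact ih.comp (Equiv.swap p.1 p.2).bijective

end SpeedupAux

open Fin.NatCast

variable {n : ℕ} [NeZero n]

/-- The list of adjacent swaps bubbling the label at position `a+d` down to position `a`. -/
def bub (n : ℕ) [NeZero n] (a : ℕ) : ℕ → List (Fin n × Fin n)
  | 0 => []
  | (d+1) => ((↑(a+d) : Fin n), (↑(a+d+1) : Fin n)) :: bub n a d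

/-- Effect of `bub n a d` on positions. -/
def eff (n : ℕ) [NeZero n] (a d : ℕ) (x : Fin n) : Fin n :=
  if x.val = a + d then (↑a : Fin n)
  else if a ≤ x.val ∧ x.val < a + d then ↑(x.val + 1) else x

lemma bub_length (a d : ℕ) : (bub n a d).length = d := by
  induction d with
  | zero => rfl
  | succ d ih => simp [bub, ih]

lemma eff_val (a d : ℕ) (h : a + d < n) (x : Fin n) :
    (eff n a d x).val =
      if x.val = a + d then a
      else if a ≤ x.val ∧ x.val < a + d then x.val + 1 else x.val := by
  unfold eff
  split_ifs with h1 h2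
  · exact Fin.val_cast_of_lt (by omega)
  · exact Fin.val_cast_of_lt (by omega)
  · rfl

lemma applySwaps_bub (a d : ℕ) (h : a + d < n) :
    applySwaps (bub n a d) (id : Fin n → Fin n) = eff n a d := by
  induction d with
  | zero =>
    funext x
    refine Fin.ext ?_
    show x.val = (eff n a 0 x).val
    rw [eff_val a 0 (by omega)]
    split_ifs <;> omega
  | succ d ih =>
    rw [bub, SpeedupAux.applySwaps_cons, SpeedupAux.applySwaps_eq_comp, ih (by omega)]
    funext x
    have hd : ((↑(a+d) : Fin n)).val = a + d := Fin.val_cast_of_lt (by omega)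
    have hd1 : ((↑(a+d+1) : Fin n)).val = a + d + 1 := Fin.val_cast_of_lt (by omega)
    have hs : (SpeedupAux.swapf ((↑(a+d) : Fin n), (↑(a+d+1) : Fin n)) (id x)).val =
        if x.val = a + d then a + d + 1 else if x.val = a + d + 1 then a + d else x.val := by
      unfold SpeedupAux.swapf
      simp only [id_eq, Fin.ext_iff, hd, hd1]
      split_ifs <;> simp only [hd, hd1]
    refine Fin.ext ?_
    show (eff n a d _).val = (eff n a (d+1) x).val
    rw [eff_val a d (by omega), eff_val a (d+1) (by omega), hs]
    split_ifs <;> omega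

/-- The full swap sequence: `m` bubbling rounds. -/
def rounds (n m : ℕ) [NeZero n] : ℕ → List (Fin n × Fin n)
  | 0 => []
  | (i+1) => rounds n m i ++ bub n i m

/-- The permutation of positions after `i` rounds. -/
def Phi (n m i : ℕ) [NeZero n] (x : Fin n) : Fin n :=
  if x.val < m then ↑(x.val + i) else if x.val < m + i then ↑(x.val - m) else x

lemma rounds_length (m i : ℕ) : (rounds n m i).length = i * m := by
  induction i with
  | zero => simp [rounds]
  | succ i ih => simp [rounds, ih, bub_length, Nat.succ_mul]

lemma Phi_val {m i : ℕ} (hn : n = 2*m) (hi : i ≤ m) (x : Fin n) :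
    (Phi n m i x).val =
      if x.val < m then x.val + i else if x.val < m + i then x.val - m else x.val := by
  unfold Phi
  have hx := x.isLt
  split_ifs with h1 h2
  · exact Fin.val_cast_of_lt (by omega)
  · exact Fin.val_cast_of_lt (by omega)
  · rfl

lemma applySwaps_rounds {m : ℕ} (hn : n = 2*m) :
    ∀ i, i ≤ m → applySwaps (rounds n m i) (id : Fin n → Fin n) = Phi n m i := by
  intro i
  induction i with
  | zero =>
    intro _
    funext x
    refine Fin.ext ?_
    show x.val = (Phi n m 0 x).val
    rw [Phi_val hn (by omega)]
    split_ifs <;> omega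
  | succ i ih =>
    intro hi
    rw [rounds, SpeedupAux.applySwaps_append, SpeedupAux.applySwaps_eq_comp,
      ih (by omega), applySwaps_bub i m (by omega)]
    funext x
    refine Fin.ext ?_
    show (eff n i m (Phi n m i x)).val = (Phi n m (i+1) x).val
    have hx := x.isLt
    rw [eff_val i m (by omega), Phi_val hn (show i ≤ m by omega),
      Phi_val hn (show i + 1 ≤ m from hi)]
    split_ifs <;> omega

lemma bub_adj {a d : ℕ} (h : a + d < n) :
    ∀ p ∈ bub n a d, (SimpleGraph.pathGraph n).Adj p.1 p.2 := by
  induction d with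
  | zero => intro p hp; simp [bub] at hp
  | succ d ih =>
    intro p hp
    rcases List.mem_cons.mp hp with rfl | hp
    · rw [SimpleGraph.pathGraph_adj]
      left
      rw [Fin.val_cast_of_lt (by omega), Fin.val_cast_of_lt (by omega)]
    · exact ih (by omega) p hp

lemma rounds_adj {m : ℕ} (hn : n = 2*m) :
    ∀ i, i ≤ m → ∀ p ∈ rounds n m i, (SimpleGraph.pathGraph n).Adj p.1 p.2 := by
  intro i
  induction i with
  | zero => intro _ p hp; simp [rounds] at hp
  | succ i ih =>
    intro hi p hp
    rcases List.mem_append.mp hp with hp | hp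
    · exact ih (by omega) p hp
    · exact bub_adj (by omega) p hp

open SimpleGraph in
lemma pathGraph_walk_exists :
    ∀ (d : ℕ) (u v : Fin n), u.val + d = v.val →
      ∃ w : (pathGraph n).Walk u v, w.length = d := by
  intro d
  induction d with
  | zero =>
    intro u v h
    have : u = v := Fin.ext (by omega)
    subst this
    exact ⟨SimpleGraph.Walk.nil, rfl⟩
  | succ d ih =>
    intro u v h
    have hv := v.isLt
    have hu1 : u.val + 1 < n := by omega
    set u' : Fin n := ⟨u.val + 1, hu1⟩ with hu'
    have hadj : (pathGraph n).Adj u u' := by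
      rw [SimpleGraph.pathGraph_adj]; left; rfl
    obtain ⟨w, hw⟩ := ih u' v (by simp [hu']; omega)
    exact ⟨SimpleGraph.Walk.cons hadj w, by simp [hw]⟩

open SimpleGraph in
lemma pathGraph_walk_length_ge {u v : Fin n} (w : (pathGraph n).Walk u v) :
    u.val - v.val ≤ w.length ∧ v.val - u.val ≤ w.length := by
  induction w with
  | nil => omega
  | cons h p ih =>
    rw [SimpleGraph.pathGraph_adj] at h
    simp only [SimpleGraph.Walk.length_cons]
    omega

open SimpleGraph in
lemma pathGraph_dist (u v : Fin n) :
    (pathGraph n).dist u v = (u.val - v.val) + (v.val - u.val) := by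
  refine le_antisymm ?_ ?_
  · rcases le_or_gt u.val v.val with h | h
    · obtain ⟨w, hw⟩ := pathGraph_walk_exists (v.val - u.val) u v (by omega)
      calc (pathGraph n).dist u v ≤ w.length := SimpleGraph.dist_le w
        _ = _ := by omega
    · obtain ⟨w, hw⟩ := pathGraph_walk_exists (u.val - v.val) v u (by omega)
      calc (pathGraph n).dist u v ≤ w.reverse.length := SimpleGraph.dist_le w.reverse
        _ = _ := by rw [SimpleGraph.Walk.length_reverse]; omega
  · obtain ⟨p, hp⟩ := (SimpleGraph.pathGraph_preconnected n u v).exists_walk_length_eq_dist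
    have := pathGraph_walk_length_ge p
    omega

open SimpleGraph in
lemma pathGraph_isTree (hpos : 0 < n) : (pathGraph n).IsTree := by
  constructor
  · haveI : Nonempty (Fin n) := ⟨⟨0, hpos⟩⟩
    exact ⟨SimpleGraph.pathGraph_preconnected n⟩
  · rw [SimpleGraph.isAcyclic_iff_forall_adj_isBridge]
    intro v w hadj
    rw [SimpleGraph.isBridge_iff]
    have hvw := SimpleGraph.pathGraph_adj.mp hadj
    set t : ℕ := min v.val w.val with ht
    set G' := (pathGraph n).deleteEdges {s(v, w)} with hG'
    have key : ∀ {x y : Fin n}, G'.Walk x y → (x.val ≤ t ↔ y.val ≤ t) := by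
      intro x y p
      induction p with
      | nil => exact Iff.rfl
      | @cons a b c h q ih =>
        rw [hG', SimpleGraph.deleteEdges_adj] at h
        obtain ⟨h1, h2⟩ := h
        have hab := SimpleGraph.pathGraph_adj.mp h1
        have hne : ¬((a = v ∧ b = w) ∨ (a = w ∧ b = v)) := by
          intro hcase
          apply h2
          rcases hcase with ⟨rfl, rfl⟩ | ⟨rfl, rfl⟩
          · exact Set.mem_singleton _
          · rw [Sym2.eq_swap]; exact Set.mem_singleton _
        have hiff : a.val ≤ t ↔ b.val ≤ t := by
          rcases le_or_gt a.val t with h3 | h3 <;> rcases le_or_gt b.val t with h4 | h4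
          · exact iff_of_true h3 h4
          · exfalso
            apply hne
            have : (a.val = v.val ∧ b.val = w.val) ∨ (a.val = w.val ∧ b.val = v.val) := by omega
            rcases this with ⟨e1, e2⟩ | ⟨e1, e2⟩
            · exact Or.inl ⟨Fin.ext e1, Fin.ext e2⟩
            · exact Or.inr ⟨Fin.ext e1, Fin.ext e2⟩
          · exfalso
            apply hne
            have : (a.val = v.val ∧ b.val = w.val) ∨ (a.val = w.val ∧ b.val = v.val) := by omega
            rcases this with ⟨e1, e2⟩ | ⟨e1, e2⟩
            · exact Or.inl ⟨Fin.ext e1, Fin.ext e2⟩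
            · exact Or.inr ⟨Fin.ext e1, Fin.ext e2⟩
          · exact iff_of_false (by omega) (by omega)
        exact hiff.trans ih
    intro hreach
    obtain ⟨p⟩ := hreach
    have := key p
    omega

open SpeedupAux in
/-- **Lower bound on the speed-up.** For every real `δ` with `0 < δ < 2` there exist a
constant `c_δ > 0` and infinitely many `n` for which the following holds: there exist a
tree `T` on `n` vertices, two bijective labelings `M₀, M₁` of `T`, and a sequence of `K`
adjacent swaps transforming `M₀` into `M₁`, such that every labeling `M_H` (an arbitrary
function from the labels to the vertices) with `D(M₀, M_H) ≤ (2−δ)·K` satisfies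
`D(M₁, M_H) ≥ c_δ · n²`, where `D f g = ∑ l, dist (f l) (g l)`.  In particular, any
algorithm that starts with a perfect hypothesis of `M₀` and performs at most `(2−δ)·K`
single-edge label moves while the adversarial evolver performs the `K` swaps ends at
distance `Ω(n²)` from `M₁`. -/
theorem speedup_lower_bound (δ : ℝ) (hδ0 : 0 < δ) (hδ2 : δ < 2) :
    ∃ c : ℝ, 0 < c ∧ ∀ N : ℕ, ∃ n, N ≤ n ∧
      ∃ G : SimpleGraph (Fin n), G.IsTree ∧
      ∃ M₀ M₁ : Fin n → Fin n, Function.Bijective M₀ ∧ Function.Bijective M₁ ∧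
      ∃ swaps : List (Fin n × Fin n),
        (∀ p ∈ swaps, G.Adj p.1 p.2) ∧
        applySwaps swaps M₀ = M₁ ∧
        ∀ MH : Fin n → Fin n,
          (∑ l, (G.dist (M₀ l) (MH l) : ℝ)) ≤ (2 - δ) * swaps.length →
          c * (n : ℝ) ^ 2 ≤ ∑ l, (G.dist (M₁ l) (MH l) : ℝ) := by
  refine ⟨δ / 4, by linarith, fun N => ?_⟩
  set m : ℕ := N + 1 with hm
  set n : ℕ := 2 * m with hn
  haveI : NeZero n := ⟨by omega⟩
  refine ⟨n, by omega, SimpleGraph.pathGraph n, pathGraph_isTree (by omega), ?_⟩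
  set swaps : List (Fin n × Fin n) := rounds n m m with hswaps
  refine ⟨id, applySwaps swaps id, Function.bijective_id, applySwaps_bijective swaps, swaps,
    rounds_adj rfl m le_rfl, rfl, ?_⟩
  intro MH hMH
  set M₁ : Fin n → Fin n := applySwaps swaps id with hM₁
  have hPhi : M₁ = Phi n m m := applySwaps_rounds rfl m le_rfl
  -- each label is moved exactly m
  have hdist1 : ∀ l : Fin n, (SimpleGraph.pathGraph n).dist l (M₁ l) = m := by
    intro l
    rw [pathGraph_dist, hPhi, Phi_val rfl le_rfl]
    have := l.isLt
    split_ifs <;> omega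
  have hK : swaps.length = m * m := rounds_length m m
  -- triangle inequality for each label
  have htri : ∀ l : Fin n,
      ((SimpleGraph.pathGraph n).dist l (M₁ l) : ℝ) ≤
        ((SimpleGraph.pathGraph n).dist (id l) (MH l) : ℝ) +
        ((SimpleGraph.pathGraph n).dist (M₁ l) (MH l) : ℝ) := by
    intro l
    have hconn : (SimpleGraph.pathGraph n).Connected := (pathGraph_isTree (by omega)).isConnected
    have := hconn.dist_triangle (u := l) (v := MH l) (w := M₁ l)
    rw [SimpleGraph.dist_comm (u := MH l) (v := M₁ l)] at this
    have := this
    push_cast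
    exact_mod_cast by exact_mod_cast Nat.cast_le.mpr this
  have hsum1 : (∑ l : Fin n, ((SimpleGraph.pathGraph n).dist l (M₁ l) : ℝ)) = 2 * (m : ℝ)^2 := by
    have : ∀ l : Fin n, ((SimpleGraph.pathGraph n).dist l (M₁ l) : ℝ) = (m : ℝ) := by
      intro l; exact_mod_cast congrArg Nat.cast (hdist1 l)
    rw [Finset.sum_congr rfl (fun l _ => this l), Finset.sum_const, Finset.card_univ,
      Fintype.card_fin, nsmul_eq_mul]
    push_cast [hn]
    ring
  have hsumtri : (2 : ℝ) * (m : ℝ)^2 ≤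
      (∑ l : Fin n, ((SimpleGraph.pathGraph n).dist (id l) (MH l) : ℝ)) +
      (∑ l : Fin n, ((SimpleGraph.pathGraph n).dist (M₁ l) (MH l) : ℝ)) := by
    rw [← hsum1, ← Finset.sum_add_distrib]
    exact Finset.sum_le_sum (fun l _ => htri l)
  have hMH' : (∑ l : Fin n, ((SimpleGraph.pathGraph n).dist (id l) (MH l) : ℝ)) ≤
      (2 - δ) * ((m : ℝ) * m) := by
    calc _ ≤ (2 - δ) * (swaps.length : ℝ) := hMH
    _ = (2 - δ) * ((m : ℝ) * m) := by rw [hK]; push_cast; ring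
  have hn' : (n : ℝ) = 2 * (m : ℝ) := by push_cast [hn]; ring
  have hgoal : δ / 4 * (n : ℝ)^2 = δ * (m : ℝ)^2 := by rw [hn']; ring
  rw [hgoal]
  nlinarith [hsumtri, hMH']
end
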